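/- arXiv:math/0612369 — 15 statements merged into one kernel-verified Lean document; each statement's English description precedes it below -/
import Mathlib

section
/- Let m ≥ 1 be an integer, let C be a finite set of cardinality 2m, and let A be a subset of C of cardinality m. Then the set of all rational numbers |B∩A|/|B|, taken over all nonempty subsets B ⊆ C, is exactly the Farey subsequence F(B(2m),m), i.e. it equals the set of rationals q with 0 ≤ q ≤ 1 whose lowest-terms representation h/k satisfies k ≤ 2m, h ≤ m and k−h ≤ m. -/
/-- The Farey sequence `F_n` of order `n`, viewed as the set of rationals `q`
with `0 ≤ q ≤ 1` whose lowest-terms denominator is at most `n`. -/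
def Farey (n : ℕ) : Set ℚ :=
  {q : ℚ | 0 ≤ q ∧ q ≤ 1 ∧ q.den ≤ n}

/-- The Farey subsequence `F(B(n),m)`: fractions `h/k ∈ F_n` in lowest terms
with `h ≤ m` and `k - h ≤ n - m`. -/
def FareyB (n m : ℕ) : Set ℚ :=
  {q : ℚ | 0 ≤ q ∧ q ≤ 1 ∧ q.den ≤ n ∧ q.num ≤ (m : ℤ) ∧
    (q.den : ℤ) - q.num ≤ (n : ℤ) - (m : ℤ)}

/-- `f'` is the predecessor of `f` in the set `S` of rationals. -/
def IsPredIn (S : Set ℚ) (f' f : ℚ) : Prop :=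
  f' ∈ S ∧ f ∈ S ∧ f' < f ∧ ∀ g ∈ S, ¬(f' < g ∧ g < f)

/-- `f'` is the successor of `f` in the set `S` of rationals. -/
def IsSuccIn (S : Set ℚ) (f f' : ℚ) : Prop :=
  f ∈ S ∧ f' ∈ S ∧ f < f' ∧ ∀ g ∈ S, ¬(f < g ∧ g < f')

/-- The set of fractions `|B ∩ A| / |B|` over nonempty `B ⊆ C`, where `|C| = 2m`
and `|A| = m`, is exactly the Farey subsequence `F(B(2m),m)`. -/
theorem stmt_0 {α : Type*} [DecidableEq α] (m : ℕ) (hm : 1 ≤ m)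
    (C A : Finset α) (hAC : A ⊆ C) (hC : C.card = 2 * m) (hA : A.card = m) :
    {q : ℚ | ∃ B ⊆ C, B.Nonempty ∧ q = ((B ∩ A).card : ℚ) / (B.card : ℚ)} =
      FareyB (2 * m) m := by
  ext q
  simp only [FareyB, Set.mem_setOf_eq]
  constructor
  · rintro ⟨B, hBC, hBne, rfl⟩
    set a := (B ∩ A).card with ha
    set b := B.card with hb
    have hb1 : 1 ≤ b := Finset.card_pos.mpr hBne
    have hab : a ≤ b := Finset.card_le_card Finset.inter_subset_left
    have ham : a ≤ m := by
      calc a ≤ A.card := Finset.card_le_card Finset.inter_subset_right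
      _ = m := hA
    have hbm : b ≤ 2 * m := hC ▸ Finset.card_le_card hBC
    have hdiff : b - a ≤ m := by
      have h1 : (B \ A).card ≤ (C \ A).card :=
        Finset.card_le_card (Finset.sdiff_subset_sdiff hBC subset_rfl)
      have h2 : (C \ A).card = m := by
        rw [Finset.card_sdiff_of_subset hAC, hC, hA]; omega
      have h3 : a + (B \ A).card = b := Finset.card_inter_add_card_sdiff B A
      omega
    set q : ℚ := (a : ℚ) / (b : ℚ) with hq
    have hbpos : (0:ℚ) < (b:ℚ) := by exact_mod_cast hb1
    have hq0 : 0 ≤ q := by positivity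
    have hq1 : q ≤ 1 := by
      rw [hq, div_le_one hbpos]; exact_mod_cast hab
    -- denominator divides b
    have hdvd : (q.den : ℤ) ∣ (b : ℤ) := by
      have hq' : q = ((a:ℤ) : ℚ) / ((b:ℤ):ℚ) := by push_cast; rw [hq]
      rw [hq', ← Rat.divInt_eq_div]
      exact Rat.den_dvd _ _
    obtain ⟨g, hg⟩ := hdvd
    have hg1 : 1 ≤ g := by
      have hbz : (0:ℤ) < (q.den:ℤ) * g := by rw [← hg]; exact_mod_cast hb1
      have hdz : (0:ℤ) < (q.den:ℤ) := by exact_mod_cast q.pos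
      nlinarith
    have hcross : q.num * (b:ℤ) = (a:ℤ) * (q.den : ℤ) := by
      have := Rat.num_div_den q
      have hne : (q.den : ℚ) ≠ 0 := by exact_mod_cast q.den_nz
      have : (q.num : ℚ) * (b:ℚ) = (a:ℚ) * (q.den:ℚ) := by
        rw [hq] at this
        field_simp at this
        linarith [this]
      exact_mod_cast this
    have hnum : q.num * g = (a:ℤ) := by
      have hden : (0:ℤ) < (q.den:ℤ) := by exact_mod_cast q.pos
      have : q.num * g * (q.den:ℤ) = (a:ℤ) * (q.den:ℤ) := by
        rw [← hcross, hg]; ring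
      exact mul_right_cancel₀ (ne_of_gt hden) this
    have hnum0 : 0 ≤ q.num := Rat.num_nonneg.mpr hq0
    have hnd : q.num ≤ (q.den : ℤ) := by
      have hq1' := hq1
      rw [← Rat.num_div_den q, div_le_one (by exact_mod_cast q.pos : (0:ℚ) < (q.den:ℚ))] at hq1'
      exact_mod_cast hq1'
    refine ⟨hq0, hq1, ?_, ?_, ?_⟩
    · have : (q.den:ℤ) ≤ (q.den:ℤ) * g := le_mul_of_one_le_right (by positivity) hg1
      have hble : (q.den:ℤ) ≤ (b:ℤ) := by rw [hg]; exact this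
      have hf : (q.den:ℤ) ≤ ((2*m : ℕ):ℤ) := hble.trans (by exact_mod_cast hbm)
      exact_mod_cast hf
    · calc q.num ≤ q.num * g := le_mul_of_one_le_right hnum0 hg1
        _ = (a:ℤ) := hnum
        _ ≤ m := by exact_mod_cast ham
    · have h1 : (q.den:ℤ) - q.num ≤ ((q.den:ℤ) - q.num) * g :=
        le_mul_of_one_le_right (by omega) hg1
      have h2 : ((q.den:ℤ) - q.num) * g = (b:ℤ) - (a:ℤ) := by
        rw [sub_mul, hnum, ← hg]
      have h3 : (b:ℤ) - (a:ℤ) ≤ m := by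
        have : (a:ℤ) ≤ b := by exact_mod_cast hab
        omega
      omega
  · rintro ⟨hq0, hq1, hden, hnum, hdiff⟩
    set h := q.num.toNat with hh
    set k := q.den with hk
    have hnum0 : 0 ≤ q.num := Rat.num_nonneg.mpr hq0
    have hhk : h ≤ k := by
      have : q.num ≤ (q.den:ℤ) := by
        have hq1' := hq1
        rw [← Rat.num_div_den q, div_le_one (by exact_mod_cast q.pos : (0:ℚ) < (q.den:ℚ))] at hq1'
        exact_mod_cast hq1'
      omega
    have hhm : h ≤ m := by omega
    have hkhm : k - h ≤ m := by omega
    have hCA : (C \ A).card = m := by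
      rw [Finset.card_sdiff_of_subset hAC, hC, hA]; omega
    obtain ⟨S, hSA, hScard⟩ := Finset.exists_subset_card_eq (hA ▸ hhm : h ≤ A.card)
    obtain ⟨T, hTCA, hTcard⟩ := Finset.exists_subset_card_eq (hCA ▸ hkhm : k - h ≤ (C \ A).card)
    refine ⟨S ∪ T, ?_, ?_, ?_⟩
    · exact Finset.union_subset (hSA.trans hAC) (hTCA.trans (Finset.sdiff_subset))
    · rw [← Finset.card_pos, Finset.card_union_of_disjoint, hScard, hTcard]
      · have := q.pos
        omega
      · exact Finset.disjoint_left.mpr fun x hxS hxT =>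
          (Finset.mem_sdiff.mp (hTCA hxT)).2 (hSA hxS)
    · have hdisj : Disjoint S T := Finset.disjoint_left.mpr fun x hxS hxT =>
        (Finset.mem_sdiff.mp (hTCA hxT)).2 (hSA hxS)
      have hinter : (S ∪ T) ∩ A = S := by
        rw [Finset.union_inter_distrib_right]
        have h1 : S ∩ A = S := Finset.inter_eq_left.mpr hSA
        have h2 : T ∩ A = ∅ := Finset.eq_empty_of_forall_notMem fun x hx => by
          obtain ⟨hxT, hxA⟩ := Finset.mem_inter.mp hx
          exact (Finset.mem_sdiff.mp (hTCA hxT)).2 hxA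
        rw [h1, h2, Finset.union_empty]
      rw [hinter, Finset.card_union_of_disjoint hdisj, hScard, hTcard]
      have : h + (k - h) = k := by omega
      rw [this]
      have : ((h:ℚ)) = (q.num : ℚ) := by exact_mod_cast Int.toNat_of_nonneg hnum0
      rw [this]
      exact (Rat.num_div_den q).symm
end

section
/- Let m > 1 be an integer. The map h/k ↦ h/(k−h) is an order-preserving bijection from F^{≤1/2}(B(2m),m) onto the Farey sequence F_m, and the map h/k ↦ h/(k+h) is its inverse, an order-preserving bijection from F_m onto F^{≤1/2}(B(2m),m). (Here h/k denotes a fraction in lowest terms.) -/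
/-- The left halfsequence `F^{≤1/2}(B(2m),m)`. -/
def FareyBLeft (m : ℕ) : Set ℚ := {q ∈ FareyB (2 * m) m | q ≤ 1 / 2}

/-- On a fraction `q = h/k` in lowest terms, the map `h/k ↦ h/(k-h)`. -/
def phi (q : ℚ) : ℚ := (q.num : ℚ) / ((q.den : ℚ) - (q.num : ℚ))

/-- On a fraction `q = h/k` in lowest terms, the map `h/k ↦ h/(k+h)`. -/
def psi (q : ℚ) : ℚ := (q.num : ℚ) / ((q.den : ℚ) + (q.num : ℚ))

/-!
Both maps are Möbius transformations: `phi q = q / (1 - q)` and `psi q = q / (1 + q)`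
are mutually inverse and increasing on `(-∞, 1)` resp. `(-1, ∞)`,
and `psi` carries `[0, 1]` onto `[0, 1/2]`. Since `gcd(h, k ∓ h) = gcd(h, k)`, they
send the reduced fraction `h/k` to the reduced fraction `h/(k ∓ h)`, so the
denominator bounds `k - h ≤ m` and `k ≤ m` correspond to each other.
-/

theorem phi_eq_div (q : ℚ) : phi q = q / (1 - q) := by
  have hden : (q.den : ℚ) ≠ 0 := by positivity
  rw [phi, ← mul_div_mul_right q (1 - q) hden, sub_mul, one_mul, Rat.mul_den_eq_num]

theorem psi_eq_div (q : ℚ) : psi q = q / (1 + q) := by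
  have hden : (q.den : ℚ) ≠ 0 := by positivity
  rw [psi, ← mul_div_mul_right q (1 + q) hden, add_mul, one_mul, Rat.mul_den_eq_num]

theorem psi_phi {q : ℚ} (hq : q ≠ 1) : psi (phi q) = q := by
  have h : 1 - q ≠ 0 := sub_ne_zero.mpr hq.symm
  rw [psi_eq_div, phi_eq_div]
  field_simp
  ring

theorem phi_psi {q : ℚ} (hq : q ≠ -1) : phi (psi q) = q := by
  have h : 1 + q ≠ 0 := fun h => hq (by linarith)
  rw [phi_eq_div, psi_eq_div]
  field_simp
  ring

theorem phi_strictMonoOn : StrictMonoOn phi (Set.Iio 1) := by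
  intro q (hq : q < 1) q' (hq' : q' < 1) hlt
  rw [phi_eq_div, phi_eq_div, div_lt_div_iff₀ (by linarith) (by linarith)]
  linarith

theorem psi_strictMonoOn : StrictMonoOn psi (Set.Ioi (-1)) := by
  intro q (hq : -1 < q) q' (hq' : -1 < q') hlt
  rw [psi_eq_div, psi_eq_div, div_lt_div_iff₀ (by linarith) (by linarith)]
  linarith

theorem den_phi {q : ℚ} (hq : q < 1) : ((phi q).den : ℤ) = q.den - q.num := by
  have hpos : 0 < (q.den : ℤ) - q.num := sub_pos.mpr (Rat.num_lt_denom_iff.mpr hq)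
  have hcop : IsCoprime q.num (q.den - q.num) := by
    simpa [sub_eq_add_neg] using q.isCoprime_num_den.add_mul_left_right (-1)
  simpa [phi] using Rat.den_div_eq_of_coprime hpos (Int.isCoprime_iff_gcd_eq_one.mp hcop)

theorem num_den_psi {q : ℚ} (hq : 0 ≤ q) :
    (psi q).num = q.num ∧ ((psi q).den : ℤ) = q.den + q.num := by
  have hpos : 0 < (q.den : ℤ) + q.num := by
    have := Rat.num_nonneg.mpr hq
    positivity
  have hcop : IsCoprime q.num (q.den + q.num) := by
    simpa using q.isCoprime_num_den.add_mul_left_right 1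
  have hcop' := Int.isCoprime_iff_gcd_eq_one.mp hcop
  constructor
  · simpa [psi] using Rat.num_div_eq_of_coprime hpos hcop'
  · simpa [psi] using Rat.den_div_eq_of_coprime hpos hcop'

theorem phi_mem_farey {m : ℕ} {q : ℚ} (hq : q ∈ FareyBLeft m) : phi q ∈ Farey m := by
  obtain ⟨⟨hq0, -, -, -, hgap⟩, hhalf⟩ := hq
  have hden := den_phi (q := q) (by linarith)
  refine ⟨?_, ?_, ?_⟩
  · rw [phi_eq_div]
    exact div_nonneg hq0 (by linarith)
  · rw [phi_eq_div, div_le_one (by linarith)]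
    linarith
  · push_cast at hgap
    omega

theorem psi_mem_fareyBLeft {m : ℕ} {q : ℚ} (hq : q ∈ Farey m) : psi q ∈ FareyBLeft m := by
  obtain ⟨hq0, hq1, hden⟩ := hq
  obtain ⟨hnum_psi, hden_psi⟩ := num_den_psi hq0
  have hnum : q.num ≤ q.den := Rat.num_le_denom_iff.mpr hq1
  have hhalf : psi q ≤ 1 / 2 := by
    rw [psi_eq_div, div_le_div_iff₀ (by linarith) two_pos]
    linarith
  refine ⟨⟨?_, by linarith, ?_, ?_, ?_⟩, hhalf⟩
  · rw [psi_eq_div]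
    exact div_nonneg hq0 (by linarith)
  all_goals push_cast; omega

theorem stmt_2_general (m : ℕ) :
    (∀ q ∈ FareyBLeft m, phi q ∈ Farey m) ∧
    (∀ q ∈ Farey m, psi q ∈ FareyBLeft m) ∧
    (∀ q ∈ FareyBLeft m, psi (phi q) = q) ∧
    (∀ q ∈ Farey m, phi (psi q) = q) ∧
    (∀ q ∈ FareyBLeft m, ∀ q' ∈ FareyBLeft m, q < q' → phi q < phi q') ∧
    (∀ q ∈ Farey m, ∀ q' ∈ Farey m, q < q' → psi q < psi q') := by
  have lt_one {q : ℚ} (hq : q ∈ FareyBLeft m) : q < 1 := by linarith [hq.2]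
  have gt_neg_one {q : ℚ} (hq : q ∈ Farey m) : -1 < q := by linarith [hq.1]
  refine ⟨fun q => phi_mem_farey, fun q => psi_mem_fareyBLeft,
    fun q hq => psi_phi (lt_one hq).ne, fun q hq => phi_psi (gt_neg_one hq).ne',
    fun q hq q' hq' => phi_strictMonoOn (lt_one hq) (lt_one hq'),
    fun q hq q' hq' => psi_strictMonoOn (gt_neg_one hq) (gt_neg_one hq')⟩

/-- For `m > 1`, the map `h/k ↦ h/(k-h)` is an order-preserving bijection from
`F^{≤1/2}(B(2m),m)` onto `F_m`, with order-preserving inverse `h/k ↦ h/(k+h)`. -/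
theorem stmt_2 (m : ℕ) (hm : 1 < m) :
    (∀ q ∈ FareyBLeft m, phi q ∈ Farey m) ∧
    (∀ q ∈ Farey m, psi q ∈ FareyBLeft m) ∧
    (∀ q ∈ FareyBLeft m, psi (phi q) = q) ∧
    (∀ q ∈ Farey m, phi (psi q) = q) ∧
    (∀ q ∈ FareyBLeft m, ∀ q' ∈ FareyBLeft m, q < q' → phi q < phi q') ∧
    (∀ q ∈ Farey m, ∀ q' ∈ Farey m, q < q' → psi q < psi q') :=
  stmt_2_general m
end

section
/- Let 0 < m < n be integers and let h/k be a fraction in lowest terms belonging to F(B(n),m) with h/k ∉ {0/1, 1/1}. Let x₀ be the integer satisfying k·x₀ ≡ −1 (mod h) and m−h+1 ≤ x₀ ≤ m, set y₀ := (k·x₀+1)/h, and set t* := ⌊min{(m−x₀)/h, (n−y₀)/k, (n−m+x₀−y₀)/(k−h)}⌋. Then the fraction (x₀+t*·h)/(y₀+t*·k) is the predecessor of h/k in F(B(n),m). -/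
set_option maxHeartbeats 1000000


/-- Predecessor formula in `F(B(n),m)` (Lemma: [AM, Proposition 7.5(i)]). -/
theorem stmt_6 (n m : ℕ) (hm : 0 < m) (hmn : m < n)
    (h k : ℤ) (hh : 0 < h) (hhk : h < k) (hcop : Int.gcd h k = 1)
    (hmem : (h : ℚ) / (k : ℚ) ∈ FareyB n m)
    (x₀ : ℤ) (hx₁ : k * x₀ ≡ -1 [ZMOD h])
    (hx₂ : (m : ℤ) - h + 1 ≤ x₀) (hx₃ : x₀ ≤ (m : ℤ))
    (y₀ : ℤ) (hy : h * y₀ = k * x₀ + 1)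
    (tstar : ℤ)
    (htstar : tstar = ⌊min (min (((m : ℚ) - (x₀ : ℚ)) / (h : ℚ))
        (((n : ℚ) - (y₀ : ℚ)) / (k : ℚ)))
        (((n : ℚ) - (m : ℚ) + (x₀ : ℚ) - (y₀ : ℚ)) / ((k : ℚ) - (h : ℚ)))⌋) :
    IsPredIn (FareyB n m)
      (((x₀ + tstar * h : ℤ) : ℚ) / ((y₀ + tstar * k : ℤ) : ℚ))
      ((h : ℚ) / (k : ℚ)) := by
  have hk0 : (0:ℤ) < k := hh.trans hhk
  have hkh : (0:ℤ) < k - h := sub_pos.mpr hhk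
  have hhQ : (0:ℚ) < (h:ℚ) := by exact_mod_cast hh
  have hkQ : (0:ℚ) < (k:ℚ) := by exact_mod_cast hk0
  have hkhQ : (0:ℚ) < (k:ℚ) - (h:ℚ) := by
    have : ((k - h : ℤ) : ℚ) = (k:ℚ) - (h:ℚ) := by push_cast; ring
    rw [← this]; exact_mod_cast hkh
  -- num and den of h/k
  have hnum : ((h:ℚ)/(k:ℚ)).num = h := Rat.num_div_eq_of_coprime hk0 hcop
  have hden : ((((h:ℚ)/(k:ℚ)).den : ℤ)) = k := Rat.den_div_eq_of_coprime hk0 hcop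
  obtain ⟨-, -, hden_le, hnum_le, hdiff_le⟩ := hmem
  rw [hnum] at hnum_le
  rw [hden, hnum] at hdiff_le
  have hk_le_n : k ≤ (n:ℤ) := by rw [← hden]; exact_mod_cast hden_le
  -- abbreviations
  set x : ℤ := x₀ + tstar * h with hxdef
  set y : ℤ := y₀ + tstar * k with hydef
  have hE : h * y - k * x = 1 := by rw [hxdef, hydef]; linear_combination hy
  -- upper bounds from the floor
  set M : ℚ := min (min (((m : ℚ) - (x₀ : ℚ)) / (h : ℚ))
        (((n : ℚ) - (y₀ : ℚ)) / (k : ℚ)))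
        (((n : ℚ) - (m : ℚ) + (x₀ : ℚ) - (y₀ : ℚ)) / ((k : ℚ) - (h : ℚ))) with hMdef
  have htM : (tstar : ℚ) ≤ M := by rw [htstar]; exact Int.floor_le M
  have hxm : x ≤ (m:ℤ) := by
    have h1 : (tstar : ℚ) ≤ ((m : ℚ) - (x₀ : ℚ)) / (h : ℚ) :=
      htM.trans ((min_le_left _ _).trans (min_le_left _ _))
    rw [le_div_iff₀ hhQ] at h1
    have : ((x₀ + tstar * h : ℤ) : ℚ) ≤ (m:ℚ) := by push_cast; linarith
    exact_mod_cast this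
  have hyn : y ≤ (n:ℤ) := by
    have h1 : (tstar : ℚ) ≤ ((n : ℚ) - (y₀ : ℚ)) / (k : ℚ) :=
      htM.trans ((min_le_left _ _).trans (min_le_right _ _))
    rw [le_div_iff₀ hkQ] at h1
    have : ((y₀ + tstar * k : ℤ) : ℚ) ≤ (n:ℚ) := by push_cast; linarith
    exact_mod_cast this
  have hyx : y - x ≤ (n:ℤ) - m := by
    have h1 : (tstar : ℚ) ≤ ((n : ℚ) - (m : ℚ) + (x₀ : ℚ) - (y₀ : ℚ)) / ((k : ℚ) - (h : ℚ)) :=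
      htM.trans (min_le_right _ _)
    rw [le_div_iff₀ hkhQ] at h1
    have : ((y₀ + tstar * k : ℤ) : ℚ) - ((x₀ + tstar * h : ℤ) : ℚ) ≤ (n:ℚ) - (m:ℚ) := by
      push_cast; nlinarith
    rw [hxdef, hydef]; exact_mod_cast this
  -- the maximality disjunction
  have hcase : (m:ℤ) < x + h ∨ (n:ℤ) < y + k ∨ (n:ℤ) - m < (y - x) + (k - h) := by
    have hlt : M < (tstar : ℚ) + 1 := by rw [htstar]; exact Int.lt_floor_add_one M
    rcases min_lt_iff.mp hlt with h1 | h1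
    · rcases min_lt_iff.mp h1 with h2 | h2
      · left
        rw [div_lt_iff₀ hhQ] at h2
        have : (m:ℚ) < ((x₀ + tstar * h : ℤ) : ℚ) + (h:ℚ) := by push_cast; nlinarith
        exact_mod_cast this
      · right; left
        rw [div_lt_iff₀ hkQ] at h2
        have : (n:ℚ) < ((y₀ + tstar * k : ℤ) : ℚ) + (k:ℚ) := by push_cast; nlinarith
        exact_mod_cast this
    · right; right
      rw [div_lt_iff₀ hkhQ] at h1
      have : (n:ℚ) - (m:ℚ) < (((y₀ + tstar * k : ℤ) : ℚ) - ((x₀ + tstar * h : ℤ) : ℚ))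
          + ((k:ℚ) - (h:ℚ)) := by push_cast; nlinarith
      rw [hxdef, hydef]; exact_mod_cast this
  -- nonnegativity of x via the canonical representative x₀ % h
  have hx0 : 0 ≤ x := by
    set t₀ : ℤ := -(x₀ / h) with ht₀
    set x' : ℤ := x₀ % h with hx'
    have hxe : x₀ + t₀ * h = x' := by
      rw [hx', ht₀, Int.emod_def]; ring
    have hx'0 : 0 ≤ x' := Int.emod_nonneg x₀ hh.ne'
    have hx'h : x' < h := Int.emod_lt_of_pos x₀ hh
    set y' : ℤ := y₀ + t₀ * k with hy'
    have hE' : h * y' = k * x' + 1 := by rw [hy', ← hxe]; linear_combination hy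
    -- y' ≤ k
    have hy'k : y' ≤ k := by
      have h1 : k * x' ≤ k * (h - 1) := mul_le_mul_of_nonneg_left (by linarith) hk0.le
      have h2 : h * y' ≤ h * k := by nlinarith
      exact le_of_mul_le_mul_left h2 hh
    -- y' - x' ≤ k - h
    have hy'x' : y' - x' ≤ k - h := by
      have h1 : (k - h) * x' ≤ (k - h) * (h - 1) := mul_le_mul_of_nonneg_left (by linarith) hkh.le
      have h2 : h * (y' - x') ≤ h * (k - h) := by nlinarith
      exact le_of_mul_le_mul_left h2 hh
    have ht₀le : t₀ ≤ tstar := by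
      rw [htstar]
      apply Int.le_floor.mpr
      refine le_min (le_min ?_ ?_) ?_
      · rw [le_div_iff₀ hhQ]
        have h3 : x₀ + t₀ * h ≤ (m:ℤ) := by rw [hxe]; linarith
        have : ((x₀ + t₀ * h : ℤ) : ℚ) ≤ ((m:ℤ) : ℚ) := by exact_mod_cast h3
        push_cast at this ⊢; linarith
      · rw [le_div_iff₀ hkQ]
        have h3 : y₀ + t₀ * k ≤ (n:ℤ) := by rw [← hy'] at *; linarith
        have : ((y₀ + t₀ * k : ℤ) : ℚ) ≤ ((n:ℤ) : ℚ) := by exact_mod_cast h3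
        push_cast at this ⊢; linarith
      · rw [le_div_iff₀ hkhQ]
        have h3 : (y₀ + t₀ * k) - (x₀ + t₀ * h) ≤ (n:ℤ) - m := by
          rw [hxe, ← hy']; linarith
        have : (((y₀ + t₀ * k) - (x₀ + t₀ * h) : ℤ) : ℚ) ≤ (((n:ℤ) - m : ℤ) : ℚ) := by
          exact_mod_cast h3
        push_cast at this ⊢; nlinarith
    have : x₀ + t₀ * h ≤ x := by rw [hxdef]; nlinarith
    linarith [hxe ▸ this]
  -- basic facts about x, y
  have hy1 : 1 ≤ y := by nlinarith
  have hxy : x < y := by nlinarith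
  have hyQ : (0:ℚ) < (y:ℚ) := by exact_mod_cast hy1
  have hcxy : Nat.Coprime x.natAbs y.natAbs := by
    have : IsCoprime x y := ⟨-k, h, by linarith⟩
    exact Int.isCoprime_iff_gcd_eq_one.mp this
  have hnumxy : ((x:ℚ)/(y:ℚ)).num = x := Rat.num_div_eq_of_coprime hy1 hcxy
  have hdenxy : ((((x:ℚ)/(y:ℚ)).den : ℤ)) = y := Rat.den_div_eq_of_coprime hy1 hcxy
  have hmemxy : ((x:ℤ):ℚ)/((y:ℤ):ℚ) ∈ FareyB n m := by
    refine ⟨?_, ?_, ?_, ?_, ?_⟩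
    · positivity
    · rw [div_le_one hyQ]; exact_mod_cast hxy.le
    · have : (((x:ℚ)/(y:ℚ)).den : ℤ) ≤ (n:ℤ) := by rw [hdenxy]; exact hyn
      exact_mod_cast this
    · rw [hnumxy]; exact hxm
    · rw [hnumxy, hdenxy]; exact hyx
  have hlt : ((x:ℤ):ℚ)/((y:ℤ):ℚ) < (h:ℚ)/(k:ℚ) := by
    rw [div_lt_div_iff₀ hyQ hkQ]
    have : x * k < h * y := by nlinarith
    exact_mod_cast this
  refine ⟨hmemxy, ⟨?_, ?_, ?_, ?_, ?_⟩, hlt, ?_⟩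
  · positivity
  · rw [div_le_one hkQ]; exact_mod_cast hhk.le
  · exact hden_le
  · rw [hnum]; exact hnum_le
  · rw [hden, hnum]; exact hdiff_le
  · rintro g ⟨-, -, hgden, hgnum, hgdiff⟩ ⟨hg1, hg2⟩
    set p : ℤ := g.num with hp
    set q : ℤ := (g.den : ℤ) with hq
    have hq0 : (0:ℚ) < (q:ℚ) := by rw [hq]; exact_mod_cast g.pos
    have hgeq : g = (p:ℚ)/(q:ℚ) := by rw [hp, hq]; exact (Rat.num_div_den g).symm
    rw [hgeq] at hg1 hg2
    rw [div_lt_div_iff₀ hyQ hq0] at hg1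
    rw [div_lt_div_iff₀ hq0 hkQ] at hg2
    have hb : 1 ≤ p * y - q * x := by
      have : x * q < p * y := by exact_mod_cast hg1
      linarith
    have ha : 1 ≤ h * q - k * p := by
      have : p * k < h * q := by exact_mod_cast hg2
      linarith
    have hpid : p = x * (h * q - k * p) + h * (p * y - q * x) := by linear_combination (-p) * hE
    have hqid : q = y * (h * q - k * p) + k * (p * y - q * x) := by linear_combination (-q) * hE
    have hqn : q ≤ (n:ℤ) := by rw [hq]; exact_mod_cast hgden
    have hdid : q - p = (y - x) * (h * q - k * p) + (k - h) * (p * y - q * x) := by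
      linear_combination hqid - hpid
    rcases hcase with hc | hc | hc
    · have h1 : x * 1 ≤ x * (h * q - k * p) := mul_le_mul_of_nonneg_left ha hx0
      have h2 : h * 1 ≤ h * (p * y - q * x) := mul_le_mul_of_nonneg_left hb hh.le
      have : x + h ≤ p := by linarith
      linarith
    · have h1 : y * 1 ≤ y * (h * q - k * p) := mul_le_mul_of_nonneg_left ha (by linarith)
      have h2 : k * 1 ≤ k * (p * y - q * x) := mul_le_mul_of_nonneg_left hb hk0.le
      have : y + k ≤ q := by linarith
      linarith
    · have h1 : (y - x) * 1 ≤ (y - x) * (h * q - k * p) :=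
        mul_le_mul_of_nonneg_left ha (by linarith)
      have h2 : (k - h) * 1 ≤ (k - h) * (p * y - q * x) := mul_le_mul_of_nonneg_left hb hkh.le
      have : (y - x) + (k - h) ≤ q - p := by linarith
      linarith
end

section
/- Let 0 < m < n be integers and let h/k be a fraction in lowest terms belonging to F(B(n),m) with h/k ∉ {0/1, 1/1}. Let x₀ be the integer satisfying k·x₀ ≡ 1 (mod h) and m−h+1 ≤ x₀ ≤ m, set y₀ := (k·x₀−1)/h, and set t* := ⌊min{(m−x₀)/h, (n−y₀)/k, (n−m+x₀−y₀)/(k−h)}⌋. Then the fraction (x₀+t*·h)/(y₀+t*·k) is the successor of h/k in F(B(n),m). -/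
set_option maxHeartbeats 1000000


private lemma le_quot {z p q : ℤ} (hq : 0 < q) (H : z * q ≤ p) :
    (z : ℚ) ≤ (p : ℚ) / (q : ℚ) := by
  rw [le_div_iff₀ (by exact_mod_cast hq)]
  exact_mod_cast H

private lemma quot_ge {z p q : ℤ} (hq : 0 < q) (H : (z : ℚ) ≤ (p : ℚ) / (q : ℚ)) :
    z * q ≤ p := by
  rw [le_div_iff₀ (by exact_mod_cast hq : (0:ℚ) < (q:ℚ))] at H
  exact_mod_cast H

/-- Successor formula in `F(B(n),m)` (Lemma: [AM, Proposition 7.5(ii)]). -/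
theorem stmt_7 (n m : ℕ) (hm : 0 < m) (hmn : m < n)
    (h k : ℤ) (hh : 0 < h) (hhk : h < k) (hcop : Int.gcd h k = 1)
    (hmem : (h : ℚ) / (k : ℚ) ∈ FareyB n m)
    (x₀ : ℤ) (hx₁ : k * x₀ ≡ 1 [ZMOD h])
    (hx₂ : (m : ℤ) - h + 1 ≤ x₀) (hx₃ : x₀ ≤ (m : ℤ))
    (y₀ : ℤ) (hy : h * y₀ = k * x₀ - 1)
    (tstar : ℤ)
    (htstar : tstar = ⌊min (min (((m : ℚ) - (x₀ : ℚ)) / (h : ℚ))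
        (((n : ℚ) - (y₀ : ℚ)) / (k : ℚ)))
        (((n : ℚ) - (m : ℚ) + (x₀ : ℚ) - (y₀ : ℚ)) / ((k : ℚ) - (h : ℚ)))⌋) :
    IsSuccIn (FareyB n m) ((h : ℚ) / (k : ℚ))
      (((x₀ + tstar * h : ℤ) : ℚ) / ((y₀ + tstar * k : ℤ) : ℚ)) := by
  have hk : (0:ℤ) < k := hh.trans hhk
  have hkh : (0:ℤ) < k - h := by linarith
  set x : ℤ := x₀ + tstar * h with hxdef
  set y : ℤ := y₀ + tstar * k with hydef
  have E : h * y = k * x - 1 := by rw [hxdef, hydef]; linear_combination hy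
  -- extract facts about h/k from membership
  have hcop' : Nat.Coprime h.natAbs k.natAbs := hcop
  obtain ⟨-, -, hden, hnum, hdiff⟩ := hmem
  rw [Rat.num_div_eq_of_coprime hk hcop'] at hnum hdiff
  have hdenk : (((h:ℚ)/(k:ℚ)).den : ℤ) = k := Rat.den_div_eq_of_coprime hk hcop'
  have hkn : k ≤ (n : ℤ) := by
    rw [← hdenk]; exact_mod_cast hden
  have hkhnm : k - h ≤ (n : ℤ) - (m : ℤ) := by rw [hdenk] at hdiff; linarith
  have hhm : h ≤ (m : ℤ) := hnum
  -- quotients abbreviations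
  set A : ℚ := ((m : ℚ) - (x₀ : ℚ)) / (h : ℚ) with hA
  set B : ℚ := ((n : ℚ) - (y₀ : ℚ)) / (k : ℚ) with hB
  set C : ℚ := ((n : ℚ) - (m : ℚ) + (x₀ : ℚ) - (y₀ : ℚ)) / ((k : ℚ) - (h : ℚ)) with hC
  have hAq : A = (((m:ℤ) - x₀ : ℤ) : ℚ) / ((h : ℤ) : ℚ) := by
    rw [hA]; push_cast; ring
  have hBq : B = (((n:ℤ) - y₀ : ℤ) : ℚ) / ((k : ℤ) : ℚ) := by
    rw [hB]; push_cast; ring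
  have hCq : C = (((n:ℤ) - m + x₀ - y₀ : ℤ) : ℚ) / (((k - h : ℤ)) : ℚ) := by
    rw [hC]; push_cast; ring
  -- upper bounds from tstar ≤ min
  have htle : (tstar : ℚ) ≤ min (min A B) C := by
    rw [htstar]; exact Int.floor_le _
  have hxm : x ≤ (m : ℤ) := by
    have := quot_ge hh (by rw [← hAq]; exact htle.trans ((min_le_left _ _).trans (min_le_left _ _)))
    rw [hxdef]; linarith
  have hyn : y ≤ (n : ℤ) := by
    have := quot_ge hk (by rw [← hBq]; exact htle.trans ((min_le_left _ _).trans (min_le_right _ _)))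
    rw [hydef]; linarith
  have hdnm : y - x ≤ (n : ℤ) - (m : ℤ) := by
    have := quot_ge hkh (by rw [← hCq]; exact htle.trans (min_le_right _ _))
    rw [hxdef, hydef]; linarith
  -- lower bound : t₁ ≤ tstar hence 1 ≤ x
  have hx1 : 1 ≤ x := by
    set t₁ : ℤ := -((x₀ - 1) / h) with ht₁
    set x₁ : ℤ := x₀ + t₁ * h with hx₁def
    have hdm := Int.mul_ediv_add_emod (x₀ - 1) h
    have hr0 : 0 ≤ (x₀ - 1) % h := Int.emod_nonneg _ hh.ne'
    have hrh : (x₀ - 1) % h < h := Int.emod_lt_of_pos _ hh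
    have hx₁eq : x₁ = 1 + (x₀ - 1) % h := by rw [hx₁def, ht₁]; linarith
    have hx₁ge : 1 ≤ x₁ := by omega
    have hx₁le : x₁ ≤ h := by omega
    set y₁ : ℤ := y₀ + t₁ * k with hy₁def
    have E₁ : h * y₁ = k * x₁ - 1 := by rw [hx₁def, hy₁def]; linear_combination hy
    have p1 : k * x₁ ≤ k * h := mul_le_mul_of_nonneg_left hx₁le hk.le
    have p2 : (k - h) * x₁ ≤ (k - h) * h := mul_le_mul_of_nonneg_left hx₁le hkh.le
    have p3 : (k - h) * h ≤ ((n:ℤ) - m) * h := mul_le_mul_of_nonneg_right hkhnm hh.le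
    have hy₁k : y₁ < k := by
      have : h * y₁ < h * k := by linarith
      exact lt_of_mul_lt_mul_left this hh.le
    have hy₁x₁ : y₁ - x₁ < (n:ℤ) - m := by
      have : h * (y₁ - x₁) < h * ((n:ℤ) - m) := by linarith
      exact lt_of_mul_lt_mul_left this hh.le
    have h1 : (t₁ : ℚ) ≤ A := by rw [hAq]; exact le_quot hh (by linarith)
    have h2 : (t₁ : ℚ) ≤ B := by rw [hBq]; exact le_quot hk (by linarith)
    have h3 : (t₁ : ℚ) ≤ C := by
      rw [hCq]; exact le_quot hkh (by linarith)
    have ht₁t : t₁ ≤ tstar := by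
      rw [htstar]; exact Int.le_floor.mpr (le_min (le_min h1 h2) h3)
    have : t₁ * h ≤ tstar * h := mul_le_mul_of_nonneg_right ht₁t hh.le
    rw [hxdef]; rw [hx₁def] at hx₁ge; linarith
  have q1 : k * 1 ≤ k * x := mul_le_mul_of_nonneg_left hx1 hk.le
  have q2 : (k - h) * 1 ≤ (k - h) * x := mul_le_mul_of_nonneg_left hx1 hkh.le
  have hy1 : 1 ≤ y := by
    have : h * 1 ≤ h * y := by linarith
    exact le_of_mul_le_mul_left this hh
  have hxy : x ≤ y := by
    have : h * x ≤ h * y := by linarith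
    exact le_of_mul_le_mul_left this hh
  -- coprimality and num/den of the successor fraction
  have hcopxy : Int.gcd x y = 1 :=
    Int.isCoprime_iff_gcd_eq_one.mp ⟨k, -h, by linear_combination -E⟩
  have hy0 : (0:ℤ) < y := by linarith
  have hnum' : (((x:ℚ))/(y:ℚ)).num = x := Rat.num_div_eq_of_coprime hy0 hcopxy
  have hden' : ((((x:ℚ))/(y:ℚ)).den : ℤ) = y := Rat.den_div_eq_of_coprime hy0 hcopxy
  have hmemf : ((h : ℚ) / (k : ℚ)) ∈ FareyB n m := by
    refine ⟨by positivity, ?_, ?_, ?_, ?_⟩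
    · rw [div_le_one (by exact_mod_cast hk : (0:ℚ) < (k:ℚ))]; exact_mod_cast hhk.le
    · exact hden
    · rw [Rat.num_div_eq_of_coprime hk hcop']; exact hhm
    · rw [Rat.num_div_eq_of_coprime hk hcop', hdenk]; linarith
  refine ⟨hmemf, ⟨?_, ?_, ?_, ?_, ?_⟩, ?_, ?_⟩
  · positivity
  · rw [div_le_one (by exact_mod_cast hy0 : (0:ℚ) < (y:ℚ))]; exact_mod_cast hxy
  · have : (((x:ℚ)/(y:ℚ)).den : ℤ) ≤ (n : ℤ) := by rw [hden']; exact hyn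
    exact_mod_cast this
  · rw [hnum']; exact hxm
  · rw [hnum', hden']; linarith
  · rw [div_lt_div_iff₀ (by exact_mod_cast hk : (0:ℚ) < (k:ℚ))
      (by exact_mod_cast hy0 : (0:ℚ) < (y:ℚ))]
    have : h * y < x * k := by linarith
    exact_mod_cast this
  · rintro g ⟨-, -, gden, gnum, gdiff⟩ ⟨hg1, hg2⟩
    set a : ℤ := g.num with hadef
    set b : ℤ := (g.den : ℤ) with hbdef
    have hb0 : (0:ℤ) < b := by rw [hbdef]; exact_mod_cast g.pos
    have hgeq : g = (a : ℚ) / (b : ℚ) := by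
      rw [hadef, hbdef]; exact_mod_cast (Rat.num_div_den g).symm
    rw [hgeq] at hg1 hg2
    rw [div_lt_div_iff₀ (by exact_mod_cast hk : (0:ℚ) < (k:ℚ))
      (by exact_mod_cast hb0 : (0:ℚ) < (b:ℚ))] at hg1
    rw [div_lt_div_iff₀ (by exact_mod_cast hb0 : (0:ℚ) < (b:ℚ))
      (by exact_mod_cast hy0 : (0:ℚ) < (y:ℚ))] at hg2
    have hα : 1 ≤ k * a - h * b := by
      have : (h:ℤ) * b < a * k := by exact_mod_cast hg1
      linarith
    have hβ : 1 ≤ b * x - a * y := by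
      have : (a:ℤ) * y < x * b := by exact_mod_cast hg2
      linarith
    have ida : a = x * (k * a - h * b) + h * (b * x - a * y) := by linear_combination a * E
    have idb : b = y * (k * a - h * b) + k * (b * x - a * y) := by linear_combination b * E
    have ham : a ≤ (m : ℤ) := gnum
    have hbn : b ≤ (n : ℤ) := by rw [hbdef]; exact_mod_cast gden
    have hban : b - a ≤ (n : ℤ) - (m : ℤ) := gdiff
    have r1 : x * 1 ≤ x * (k * a - h * b) := mul_le_mul_of_nonneg_left hα (by linarith)
    have r2 : h * 1 ≤ h * (b * x - a * y) := mul_le_mul_of_nonneg_left hβ hh.le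
    have r3 : y * 1 ≤ y * (k * a - h * b) := mul_le_mul_of_nonneg_left hα (by linarith)
    have r4 : k * 1 ≤ k * (b * x - a * y) := mul_le_mul_of_nonneg_left hβ hk.le
    have r5 : (y - x) * 1 ≤ (y - x) * (k * a - h * b) :=
      mul_le_mul_of_nonneg_left hα (by linarith)
    have r6 : (k - h) * 1 ≤ (k - h) * (b * x - a * y) := mul_le_mul_of_nonneg_left hβ hkh.le
    have idba : b - a = (y - x) * (k * a - h * b) + (k - h) * (b * x - a * y) := by
      linear_combination (b - a) * E
    have c1 : x + h ≤ (m : ℤ) := by linarith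
    have c2 : y + k ≤ (n : ℤ) := by linarith
    have c3 : (y - x) + (k - h) ≤ (n : ℤ) - (m : ℤ) := by linarith
    have d1 : ((tstar + 1 : ℤ) : ℚ) ≤ A := by rw [hAq]; exact le_quot hh (by rw [hxdef] at c1; linarith)
    have d2 : ((tstar + 1 : ℤ) : ℚ) ≤ B := by rw [hBq]; exact le_quot hk (by rw [hydef] at c2; linarith)
    have d3 : ((tstar + 1 : ℤ) : ℚ) ≤ C := by
      rw [hCq]; exact le_quot hkh (by rw [hxdef, hydef] at c3; linarith)
    have hfin : tstar + 1 ≤ ⌊min (min A B) C⌋ :=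
      Int.le_floor.mpr (le_min (le_min d1 d2) d3)
    rw [← htstar] at hfin
    omega
end

section
/- Let 0 < m < n be integers and let h_j/k_j < h_{j+1}/k_{j+1} < h_{j+2}/k_{j+2} be three successive fractions of F(B(n),m), i.e. each is the successor of the preceding one (all fractions in lowest terms). Then, with D := ⌊min{(h_{j+2}+m)/h_{j+1}, (k_{j+2}+n)/k_{j+1}, (k_{j+2}−h_{j+2}+n−m)/(k_{j+1}−h_{j+1})}⌋, one has h_j = D·h_{j+1} − h_{j+2} and k_j = D·k_{j+1} − k_{j+2}. -/
lemma FareyB_mem_iff (n m : ℕ) {a b : ℤ} (hb : 0 < b) (hab : Int.gcd a b = 1) :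
    (a : ℚ) / (b : ℚ) ∈ FareyB n m ↔
      0 ≤ a ∧ a ≤ b ∧ b ≤ (n : ℤ) ∧ a ≤ (m : ℤ) ∧ b - a ≤ (n : ℤ) - (m : ℤ) := by
  have hnum : ((a : ℚ) / (b : ℚ)).num = a := Rat.num_div_eq_of_coprime hb hab
  have hden : (((a : ℚ) / (b : ℚ)).den : ℤ) = b := Rat.den_div_eq_of_coprime hb hab
  have hbQ : (0 : ℚ) < (b : ℚ) := by exact_mod_cast hb
  constructor
  · rintro ⟨h0, h1, h2, h3, h4⟩
    refine ⟨?_, ?_, ?_, by rwa [hnum] at h3, by rwa [hnum, hden] at h4⟩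
    · have : (0:ℚ) ≤ (a:ℚ) := by rwa [le_div_iff₀ hbQ, zero_mul] at h0
      exact_mod_cast this
    · have := (div_le_one hbQ).mp h1
      exact_mod_cast this
    · have : (((a : ℚ) / (b : ℚ)).den : ℤ) ≤ (n : ℤ) := by exact_mod_cast h2
      rwa [hden] at this
  · rintro ⟨h0, h1, h2, h3, h4⟩
    refine ⟨?_, ?_, ?_, by rwa [hnum], by rwa [hnum, hden]⟩
    · apply div_nonneg (by exact_mod_cast h0) hbQ.le
    · rw [div_le_one hbQ]; exact_mod_cast h1
    · have : (((a : ℚ) / (b : ℚ)).den : ℤ) ≤ (n : ℤ) := by rw [hden]; exact h2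
      exact_mod_cast this

lemma FareyB_unimod (n m : ℕ) (hm : 0 < m) (hmn : m < n) {a b c d : ℤ}
    (hb : 0 < b) (hd : 0 < d) (hab : Int.gcd a b = 1) (hcd : Int.gcd c d = 1)
    (hsucc : IsSuccIn (FareyB n m) ((a : ℚ) / (b : ℚ)) ((c : ℚ) / (d : ℚ))) :
    b * c - a * d = 1 := by
  obtain ⟨hmem1, hmem2, hlt, hbetw⟩ := hsucc
  obtain ⟨ha0, hab', hbn, ham, hbam⟩ := (FareyB_mem_iff n m hb hab).mp hmem1
  obtain ⟨hc0, hcd', hdn, hcm, hdcm⟩ := (FareyB_mem_iff n m hd hcd).mp hmem2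
  have hbQ : (0 : ℚ) < (b : ℚ) := by exact_mod_cast hb
  have hdQ : (0 : ℚ) < (d : ℚ) := by exact_mod_cast hd
  -- cross multiplied inequality
  have hadcb : a * d < c * b := by
    have := (div_lt_div_iff₀ hbQ hdQ).mp hlt
    exact_mod_cast this
  have hc1 : 0 < c := by
    by_contra hc
    push_neg at hc
    nlinarith
  -- obtain the extremal intermediate solution (p, q)
  obtain ⟨p, q, hpq1, hp0, hq0, hpm, hqpnm, hdisj⟩ :
      ∃ p q : ℤ, q * c - p * d = 1 ∧ 0 ≤ p ∧ 0 < q ∧ p ≤ (m : ℤ) ∧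
        q - p ≤ (n : ℤ) - (m : ℤ) ∧
        ((m : ℤ) < p + c ∨ (n : ℤ) - (m : ℤ) < (q - p) + (d - c)) := by
    rcases eq_or_lt_of_le hcd' with hcedq | hcltd
    · -- c = d, hence c = d = 1
      have hd1 : d = 1 := by
        rw [hcedq] at hcd
        have h' : d.natAbs = 1 := by simpa [Int.gcd_self] using hcd
        omega
      have hc1' : c = 1 := by omega
      exact ⟨m, m + 1, by rw [hc1', hd1]; ring, by positivity, by positivity,
        le_refl _, by omega, Or.inl (by omega)⟩
    · -- c < d
      obtain ⟨u, v, huv⟩ := Int.isCoprime_iff_gcd_eq_one.mpr hcd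
      obtain ⟨p, q, hpq, hpm', hqp', hdisj⟩ :
          ∃ p q : ℤ, q * c - p * d = 1 ∧ p ≤ (m : ℤ) ∧
            q - p ≤ (n : ℤ) - (m : ℤ) ∧
            ((m : ℤ) < p + c ∨ (n : ℤ) - (m : ℤ) < (q - p) + (d - c)) := by
        have hsol : u * c - (-v) * d = 1 := by linarith
        have hbdd : ∃ B : ℤ, ∀ t : ℤ, (-v + t * c ≤ (m : ℤ) ∧
            (u + t * d) - (-v + t * c) ≤ (n : ℤ) - (m : ℤ)) → t ≤ B := by
          refine ⟨max 0 ((m : ℤ) + v), fun t ht => ?_⟩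
          rcases le_or_gt t 0 with h | h
          · exact le_max_of_le_left h
          · refine le_max_of_le_right ?_
            have h2 : t * 1 ≤ t * c := mul_le_mul_of_nonneg_left (by omega) h.le
            have h3 := ht.1
            linarith
        have hinh : ∃ t : ℤ, (-v + t * c ≤ (m : ℤ) ∧
            (u + t * d) - (-v + t * c) ≤ (n : ℤ) - (m : ℤ)) := by
          obtain ⟨t0, ht0, ht1, ht2⟩ : ∃ t0 : ℤ, t0 ≤ 0 ∧ t0 ≤ (m : ℤ) + v ∧
              t0 ≤ (n : ℤ) - m - (u + v) :=
            ⟨min 0 (min ((m : ℤ) + v) ((n : ℤ) - m - (u + v))), min_le_left _ _,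
              le_trans (min_le_right _ _) (min_le_left _ _),
              le_trans (min_le_right _ _) (min_le_right _ _)⟩
          refine ⟨t0, ?_, ?_⟩
          · have h2 : t0 * c ≤ t0 * 1 := mul_le_mul_of_nonpos_left (by omega) ht0
            linarith
          · have h2 : t0 * (d - c) ≤ t0 * 1 := mul_le_mul_of_nonpos_left (by omega) ht0
            have h3 : (u + t0 * d) - (-v + t0 * c) = (u + v) + t0 * (d - c) := by ring
            linarith
        obtain ⟨t, ⟨ht1, ht2⟩, htmax⟩ := Int.exists_greatest_of_bdd hbdd hinh
        refine ⟨-v + t * c, u + t * d, by linear_combination hsol, ht1, by linarith, ?_⟩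
        by_contra hcon
        push_neg at hcon
        have hnext : t + 1 ≤ t := by
          refine htmax (t + 1) ⟨?_, ?_⟩
          · have := hcon.1
            nlinarith
          · have := hcon.2
            nlinarith
        omega
      have hq0 : 0 < q := by
        by_contra hq
        push_neg at hq
        have hqc : q * c ≤ 0 := mul_nonpos_of_nonpos_of_nonneg hq hc1.le
        have hp1 : p ≤ -1 := by nlinarith
        have hcase : (n : ℤ) - (m : ℤ) < (q - p) + (d - c) := by
          rcases hdisj with h | h
          · omega
          · exact h
        have hqp1 : 1 ≤ q - p := by omega
        have hkey : d * (q - p) = q * (d - c) + 1 := by linear_combination hpq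
        have h5 : q * (d - c) ≤ 0 := mul_nonpos_of_nonpos_of_nonneg hq (by omega)
        have h6 : d * 1 ≤ d * (q - p) := mul_le_mul_of_nonneg_left hqp1 hd.le
        linarith
      have hp0 : 0 ≤ p := by
        have h5 : 1 * c ≤ q * c := mul_le_mul_of_nonneg_right hq0 hc1.le
        have h6 : 0 ≤ d * p := by linarith
        exact nonneg_of_mul_nonneg_right h6 hd
      exact ⟨p, q, hpq, hp0, hq0, hpm', hqp', hdisj⟩
  -- the fraction p / q belongs to FareyB
  have hpqcop : Int.gcd p q = 1 := by
    rw [← Int.isCoprime_iff_gcd_eq_one]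
    exact ⟨-d, c, by linarith⟩
  have hpltq : p < q := by
    have h5 : q * c ≤ q * d := mul_le_mul_of_nonneg_left hcd' hq0.le
    have h6 : p * d < q * d := by linarith
    exact lt_of_mul_lt_mul_right h6 hd.le
  have hqn : q ≤ (n : ℤ) := by omega
  have hmemv : (p : ℚ) / (q : ℚ) ∈ FareyB n m :=
    (FareyB_mem_iff n m hq0 hpqcop).mpr ⟨hp0, hpltq.le, hqn, hpm, hqpnm⟩
  have hqQ : (0 : ℚ) < (q : ℚ) := by exact_mod_cast hq0
  have hvlt : (p : ℚ) / (q : ℚ) < (c : ℚ) / (d : ℚ) := by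
    rw [div_lt_div_iff₀ hqQ hdQ]
    have h5 : p * d < c * q := by linarith
    exact_mod_cast h5
  have hvle : (p : ℚ) / (q : ℚ) ≤ (a : ℚ) / (b : ℚ) := by
    by_contra h
    push_neg at h
    exact hbetw _ hmemv ⟨h, hvlt⟩
  rcases eq_or_lt_of_le hvle with heq | hltv
  · obtain ⟨hpa, hqb⟩ := Rat.div_int_inj hq0 hb hpqcop hab heq
    rw [← hpa, ← hqb]; linarith
  · -- p/q < a/b leads to contradiction
    have hpbaq : p * b < a * q := by
      have := (div_lt_div_iff₀ hqQ hbQ).mp hltv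
      exact_mod_cast this
    have hbqd : q + d ≤ b := by
      have e3 : b = q * (c * b) - (p * b) * d := by linear_combination (-b) * hpq1
      have i1 : q * (a * d + 1) ≤ q * (c * b) :=
        mul_le_mul_of_nonneg_left (by linarith) hq0.le
      have i2 : (p * b) * d ≤ (a * q - 1) * d :=
        mul_le_mul_of_nonneg_right (by linarith) hd.le
      have e2 : q * (a * d + 1) - (a * q - 1) * d = q + d := by ring
      linarith
    have hapc : p + c ≤ a := by
      have i3 : p * (q + d) ≤ p * b := mul_le_mul_of_nonneg_left hbqd hp0
      have e4 : p * (q + d) + 1 = q * (p + c) := by linear_combination (-1 : ℤ) * hpq1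
      have i5 : q * (p + c) ≤ q * a := by linarith
      exact le_of_mul_le_mul_left i5 hq0
    have hba : (q - p) + (d - c) ≤ b - a := by
      have i7 : (q + d) * (d - c) ≤ b * (d - c) :=
        mul_le_mul_of_nonneg_right hbqd (by linarith)
      have e6 : (q + d) * (d - c) + 1 = d * ((q - p) + (d - c)) := by
        linear_combination (-1 : ℤ) * hpq1
      have e7 : d * (b - a) = b * (d - c) + 1 + (c * b - a * d - 1) := by ring
      have i8 : d * ((q - p) + (d - c)) ≤ d * (b - a) := by linarith
      exact le_of_mul_le_mul_left i8 hd
    rcases hdisj with h | h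
    · omega
    · omega

/-- Recurrence for the left neighbor among three successive fractions of
`F(B(n),m)` (Lemma: [AM, Proposition 7.8(i)]). -/
theorem stmt_8 (n m : ℕ) (hm : 0 < m) (hmn : m < n)
    (h₁ k₁ h₂ k₂ h₃ k₃ : ℤ)
    (hk₁ : 0 < k₁) (hk₂ : 0 < k₂) (hk₃ : 0 < k₃)
    (hc₁ : Int.gcd h₁ k₁ = 1) (hc₂ : Int.gcd h₂ k₂ = 1) (hc₃ : Int.gcd h₃ k₃ = 1)
    (hm₁ : (h₁ : ℚ) / (k₁ : ℚ) ∈ FareyB n m)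
    (hm₂ : (h₂ : ℚ) / (k₂ : ℚ) ∈ FareyB n m)
    (hm₃ : (h₃ : ℚ) / (k₃ : ℚ) ∈ FareyB n m)
    (hs₁ : IsSuccIn (FareyB n m) ((h₁ : ℚ) / (k₁ : ℚ)) ((h₂ : ℚ) / (k₂ : ℚ)))
    (hs₂ : IsSuccIn (FareyB n m) ((h₂ : ℚ) / (k₂ : ℚ)) ((h₃ : ℚ) / (k₃ : ℚ)))
    (D : ℤ)
    (hD : D = ⌊min (min (((h₃ : ℚ) + (m : ℚ)) / (h₂ : ℚ))
        (((k₃ : ℚ) + (n : ℚ)) / (k₂ : ℚ)))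
        (((k₃ : ℚ) - (h₃ : ℚ) + (n : ℚ) - (m : ℚ)) / ((k₂ : ℚ) - (h₂ : ℚ)))⌋) :
    h₁ = D * h₂ - h₃ ∧ k₁ = D * k₂ - k₃ := by
  -- unimodularity of the two neighboring pairs
  have hu₁ : k₁ * h₂ - h₁ * k₂ = 1 := FareyB_unimod n m hm hmn hk₁ hk₂ hc₁ hc₂ hs₁
  have hu₂ : k₂ * h₃ - h₂ * k₃ = 1 := FareyB_unimod n m hm hmn hk₂ hk₃ hc₂ hc₃ hs₂
  obtain ⟨hh₁0, hh₁k₁, hk₁n, hh₁m, hd₁⟩ := (FareyB_mem_iff n m hk₁ hc₁).mp hm₁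
  obtain ⟨hh₂0, hh₂k₂, hk₂n, hh₂m, hd₂⟩ := (FareyB_mem_iff n m hk₂ hc₂).mp hm₂
  obtain ⟨hh₃0, hh₃k₃, hk₃n, hh₃m, hd₃⟩ := (FareyB_mem_iff n m hk₃ hc₃).mp hm₃
  have hk₁Q : (0 : ℚ) < (k₁ : ℚ) := by exact_mod_cast hk₁
  have hk₂Q : (0 : ℚ) < (k₂ : ℚ) := by exact_mod_cast hk₂
  have hk₃Q : (0 : ℚ) < (k₃ : ℚ) := by exact_mod_cast hk₃
  have hlt₁ := hs₁.2.2.1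
  have hlt₂ := hs₂.2.2.1
  have hcross₁ : h₁ * k₂ < h₂ * k₁ := by
    have := (div_lt_div_iff₀ hk₁Q hk₂Q).mp hlt₁
    exact_mod_cast this
  have hcross₂ : h₂ * k₃ < h₃ * k₂ := by
    have := (div_lt_div_iff₀ hk₂Q hk₃Q).mp hlt₂
    exact_mod_cast this
  -- h₂ > 0
  have hh₂pos : 0 < h₂ := by nlinarith
  -- h₂ < k₂
  have hh₂ltk₂ : h₂ < k₂ := by nlinarith
  have hh₂Q : (0 : ℚ) < (h₂ : ℚ) := by exact_mod_cast hh₂pos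
  have hkh₂Q : (0 : ℚ) < (k₂ : ℚ) - (h₂ : ℚ) := by
    have : (h₂ : ℚ) < (k₂ : ℚ) := by exact_mod_cast hh₂ltk₂
    linarith
  -- the integer a with h₁ + h₃ = a h₂, k₁ + k₃ = a k₂
  have hkey : k₂ * (h₁ + h₃) = h₂ * (k₁ + k₃) := by linarith [hu₁, hu₂]; 
  have hcop : IsCoprime k₂ h₂ := (Int.isCoprime_iff_gcd_eq_one.mpr hc₂).symm
  have hdvd : k₂ ∣ (k₁ + k₃) := by
    refine hcop.dvd_of_dvd_mul_left ?_
    exact ⟨h₁ + h₃, by linarith [hkey]⟩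
  obtain ⟨A, hA⟩ := hdvd
  have hAh : h₁ + h₃ = A * h₂ := by
    have : k₂ * (h₁ + h₃) = k₂ * (A * h₂) := by rw [hkey, hA]; ring
    exact mul_left_cancel₀ hk₂.ne' this
  -- A ≤ D
  have hAleD : A ≤ D := by
    rw [hD]
    rw [Int.le_floor]
    refine le_min (le_min ?_ ?_) ?_
    · rw [le_div_iff₀ hh₂Q]
      have : A * h₂ ≤ h₃ + m := by linarith [hAh, hh₁m]
      exact_mod_cast this
    · rw [le_div_iff₀ hk₂Q]
      have : A * k₂ ≤ k₃ + n := by linarith [hA, hk₁n]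
      exact_mod_cast this
    · rw [le_div_iff₀ hkh₂Q]
      have h5 : A * (k₂ - h₂) ≤ (k₃ - h₃) + ((n : ℤ) - m) := by
        have e1 : A * (k₂ - h₂) = (k₁ + k₃) - (h₁ + h₃) := by rw [hA, hAh]; ring
        linarith
      have h6 : ((A * (k₂ - h₂) : ℤ) : ℚ) ≤ (((k₃ - h₃) + ((n : ℤ) - m) : ℤ) : ℚ) := by
        exact_mod_cast h5
      push_cast at h6
      linarith
  -- D ≤ A
  have hDleA : D ≤ A := by
    by_contra hcon
    push_neg at hcon
    have hA1 : A + 1 ≤ D := by omega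
    have hmin : ((A : ℚ) + 1) ≤ min (min (((h₃ : ℚ) + (m : ℚ)) / (h₂ : ℚ))
        (((k₃ : ℚ) + (n : ℚ)) / (k₂ : ℚ)))
        (((k₃ : ℚ) - (h₃ : ℚ) + (n : ℚ) - (m : ℚ)) / ((k₂ : ℚ) - (h₂ : ℚ))) := by
      have h1 : ((A : ℚ) + 1) ≤ (D : ℚ) := by exact_mod_cast hA1
      have h2 := Int.floor_le (min (min (((h₃ : ℚ) + (m : ℚ)) / (h₂ : ℚ))
        (((k₃ : ℚ) + (n : ℚ)) / (k₂ : ℚ)))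
        (((k₃ : ℚ) - (h₃ : ℚ) + (n : ℚ) - (m : ℚ)) / ((k₂ : ℚ) - (h₂ : ℚ))))
      rw [← hD] at h2
      linarith
    have hm1 : (A + 1) * h₂ ≤ h₃ + m := by
      have := (le_div_iff₀ hh₂Q).mp (le_trans hmin (min_le_of_left_le (min_le_left _ _)))
      exact_mod_cast this
    have hm2 : (A + 1) * k₂ ≤ k₃ + n := by
      have := (le_div_iff₀ hk₂Q).mp (le_trans hmin (min_le_of_left_le (min_le_right _ _)))
      exact_mod_cast this
    have hm3 : (A + 1) * (k₂ - h₂) ≤ (k₃ - h₃) + ((n : ℤ) - m) := by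
      have hQ := (le_div_iff₀ hkh₂Q).mp (le_trans hmin (min_le_right _ _))
      have h6 : (((A + 1) * (k₂ - h₂) : ℤ) : ℚ) ≤ (((k₃ - h₃) + ((n : ℤ) - (m : ℤ)) : ℤ) : ℚ) := by
        push_cast
        linarith
      exact_mod_cast h6
    -- the mediant contradicts adjacency of h₁/k₁ and h₂/k₂
    have eA1 : (A + 1) * h₂ = (h₁ + h₃) + h₂ := by rw [hAh]; ring
    have eA2 : (A + 1) * k₂ = (k₁ + k₃) + k₂ := by rw [hA]; ring
    have hnum : h₁ + h₂ ≤ (m : ℤ) := by linarith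
    have hden : k₁ + k₂ ≤ (n : ℤ) := by linarith
    have hdiff : (k₁ + k₂) - (h₁ + h₂) ≤ (n : ℤ) - m := by
      have e3 : (A + 1) * (k₂ - h₂) = ((k₁ + k₃) + k₂) - ((h₁ + h₃) + h₂) := by
        rw [mul_sub, eA1, eA2]
      linarith
    have hcopm : Int.gcd (h₁ + h₂) (k₁ + k₂) = 1 := by
      rw [← Int.isCoprime_iff_gcd_eq_one]
      exact ⟨-k₂, h₂, by linarith [hu₁]⟩
    have hkpos : 0 < k₁ + k₂ := by positivity
    have hmemg : ((h₁ + h₂ : ℤ) : ℚ) / ((k₁ + k₂ : ℤ) : ℚ) ∈ FareyB n m := by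
      refine (FareyB_mem_iff n m hkpos hcopm).mpr ⟨by positivity, by omega, hden, hnum, hdiff⟩
    have hkQ : (0 : ℚ) < ((k₁ + k₂ : ℤ) : ℚ) := by exact_mod_cast hkpos
    have hg1 : (h₁ : ℚ) / (k₁ : ℚ) < ((h₁ + h₂ : ℤ) : ℚ) / ((k₁ + k₂ : ℤ) : ℚ) := by
      rw [div_lt_div_iff₀ hk₁Q hkQ]
      have : h₁ * (k₁ + k₂) < (h₁ + h₂) * k₁ := by linarith [hu₁]
      exact_mod_cast this
    have hg2 : ((h₁ + h₂ : ℤ) : ℚ) / ((k₁ + k₂ : ℤ) : ℚ) < (h₂ : ℚ) / (k₂ : ℚ) := by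
      rw [div_lt_div_iff₀ hkQ hk₂Q]
      have : (h₁ + h₂) * k₂ < h₂ * (k₁ + k₂) := by linarith [hu₁]
      exact_mod_cast this
    exact hs₁.2.2.2 _ hmemg ⟨hg1, hg2⟩
  have hDA : D = A := le_antisymm hDleA hAleD
  subst hDA
  constructor
  · linarith [hAh]
  · linarith [hA]
end

section
/- Let 0 < m < n be integers and let h_j/k_j < h_{j+1}/k_{j+1} < h_{j+2}/k_{j+2} be three successive fractions of F(B(n),m), i.e. each is the successor of the preceding one (all fractions in lowest terms). Then, with D := ⌊min{(h_j+m)/h_{j+1}, (k_j+n)/k_{j+1}, (k_j−h_j+n−m)/(k_{j+1}−h_{j+1})}⌋, one has h_{j+2} = D·h_{j+1} − h_j and k_{j+2} = D·k_{j+1} − k_j. -/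
/-!
Write a fraction `h / k` as the lattice vector `(h, k - h)`: then `F(B(n),m)` consists of the
primitive vectors of the rectangle `[0, m] × [0, n - m]`, ordered by slope.

Successive fractions `a / b < c / d` satisfy `c * b - a * d = 1`. Take the solution `(x, y)` of
`c * y - d * x = 1` that is maximal in the rectangle (adding `(c, d)` leaves it). Then `x / y`
lies in `F(B(n),m)` below `c / d`, hence not above `a / b`; writing
`(a, b) = α (c, d) + Δ (x, y)` with `Δ = c * b - a * d`, maximality forces `α = 0`, so `Δ`
divides `gcd a b = 1`.

For three successive fractions the two determinant identities give `h₃ = a * h₂ - h₁` and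
`k₃ = a * k₂ - k₁` with `a = h₃ * k₁ - h₁ * k₃`. The integer `a` is at most each of the three
quotients because `h₃ / k₃` lies in the rectangle, and the mediant of `h₂ / k₂` and `h₃ / k₃`
does not, which puts one of the quotients below `a + 1`.
-/

theorem intCast_div_lt_intCast_div_iff {a b c d : ℤ} (hb : 0 < b) (hd : 0 < d) :
    (a : ℚ) / b < c / d ↔ a * d < c * b := by
  rw [div_lt_div_iff₀ (by exact_mod_cast hb) (by exact_mod_cast hd)]
  exact_mod_cast Iff.rfl

theorem mem_fareyB_iff {n m : ℕ} {h k : ℤ} (hk : 0 < k) (hc : Int.gcd h k = 1) :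
    (h : ℚ) / k ∈ FareyB n m ↔ 0 ≤ h ∧ h ≤ k ∧ h ≤ m ∧ k - h ≤ (n : ℤ) - m := by
  have hk' : (0 : ℚ) < k := by exact_mod_cast hk
  have hnum : ((h : ℚ) / k).num = h := Rat.num_div_eq_of_coprime hk hc
  have hden : ((((h : ℚ) / k).den : ℕ) : ℤ) = k := Rat.den_div_eq_of_coprime hk hc
  simp only [FareyB, Set.mem_ofPred_eq, hnum, hden, le_div_iff₀ hk', zero_mul, div_le_one hk']
  constructor
  · rintro ⟨h0, h1, -, hm, hnm⟩
    exact ⟨by exact_mod_cast h0, by exact_mod_cast h1, hm, hnm⟩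
  · rintro ⟨h0, h1, hm, hnm⟩
    refine ⟨by exact_mod_cast h0, by exact_mod_cast h1, ?_, hm, hnm⟩
    zify; omega

theorem IsSuccIn.mediant_not_mem {S : Set ℚ} {a b c d : ℤ} (hb : 0 < b) (hd : 0 < d)
    (h : IsSuccIn S ((a : ℚ) / b) ((c : ℚ) / d)) : ((a + c : ℤ) : ℚ) / (b + d : ℤ) ∉ S := by
  obtain ⟨-, -, hlt, hbetween⟩ := h
  rw [intCast_div_lt_intCast_div_iff hb hd] at hlt
  refine fun hmem => hbetween _ hmem ⟨?_, ?_⟩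
  · rw [intCast_div_lt_intCast_div_iff hb (by omega)]; linarith
  · rw [intCast_div_lt_intCast_div_iff (by omega) hd]; linarith

theorem exists_det_eq_one_maximal {c d M N : ℤ} (hc : 0 < c) (hcd : c ≤ d)
    (hcop : IsCoprime c d) (hN : 1 ≤ N) :
    ∃ x y : ℤ, c * y - d * x = 1 ∧ x ≤ M ∧ y - x ≤ N ∧
      (M < x + c ∨ N < y - x + (d - c)) := by
  obtain ⟨u, v, huv⟩ := hcop
  let P : ℤ → Prop := fun t => -v + t * c ≤ M ∧ u + v + t * (d - c) ≤ N
  have hbdd : ∃ b, ∀ t, P t → t ≤ b :=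
    ⟨|M + v|, fun t ht => by
      rcases le_or_gt t 0 with h | h
      · exact h.trans (abs_nonneg _)
      · nlinarith [ht.1, le_abs_self (M + v)]⟩
  have hinh : ∃ t, P t := by
    have hs : 0 ≤ |M + v| + |N - u - v| := by positivity
    refine ⟨-(|M + v| + |N - u - v|), ?_, ?_⟩
    · nlinarith [neg_abs_le (M + v), abs_nonneg (N - u - v),
        mul_le_mul_of_nonneg_left (show 1 ≤ c by omega) hs]
    · rcases hcd.lt_or_eq with h | h
      · nlinarith [neg_abs_le (N - u - v), abs_nonneg (M + v),
          mul_le_mul_of_nonneg_left (show 1 ≤ d - c by omega) hs]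
      · subst h
        nlinarith
  obtain ⟨t, ⟨hxM, hyN⟩, htmax⟩ := Int.exists_greatest_of_bdd hbdd hinh
  refine ⟨-v + t * c, u + t * d, by linear_combination huv, hxM, by linarith, ?_⟩
  by_contra! hnot
  have := htmax (t + 1) ⟨by linarith, by linarith⟩
  omega

theorem IsSuccIn.fareyB_det_eq_one {n m : ℕ} {a b c d : ℤ} (hb : 0 < b) (hd : 0 < d)
    (hab : Int.gcd a b = 1) (hcd : Int.gcd c d = 1)
    (h : IsSuccIn (FareyB n m) ((a : ℚ) / b) ((c : ℚ) / d)) : c * b - a * d = 1 := by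
  obtain ⟨hP, hQ, hPQ, hbetween⟩ := h
  obtain ⟨ha0, hab', ham, hbam⟩ := (mem_fareyB_iff hb hab).1 hP
  obtain ⟨hc0, hcd', hcm, hdcm⟩ := (mem_fareyB_iff hd hcd).1 hQ
  rw [intCast_div_lt_intCast_div_iff hb hd] at hPQ
  have hc : 0 < c := by nlinarith
  have hba : a < b := by nlinarith
  obtain ⟨x, y, hRQ, hxm, hyxm, hmax⟩ := exists_det_eq_one_maximal (M := m) (N := n - m)
    hc hcd' (Int.isCoprime_iff_gcd_eq_one.2 hcd) (by omega)
  have hR : 0 ≤ x ∧ x < y := by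
    rcases hmax with h | h
    · have hx : 0 < x := by omega
      exact ⟨hx.le, by nlinarith⟩
    · have hyx : 0 < y - x := by omega
      rcases hcd'.lt_or_eq with hlt | rfl
      · exact ⟨by nlinarith, by omega⟩
      · omega
  have hy : 0 < y := by omega
  have hRmem : (x : ℚ) / y ∈ FareyB n m :=
    (mem_fareyB_iff hy (Int.isCoprime_iff_gcd_eq_one.1 ⟨-d, c, by linear_combination hRQ⟩)).2
      ⟨hR.1, hR.2.le, hxm, hyxm⟩
  have hRltQ : (x : ℚ) / y < c / d := (intCast_div_lt_intCast_div_iff hy hd).2 (by linarith)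
  have hRleP : ¬ a * y < x * b := fun h' =>
    hbetween _ hRmem ⟨(intCast_div_lt_intCast_div_iff hb hy).2 h', hRltQ⟩
  -- Since `c * y - d * x = 1`, `(c, d)` and `(x, y)` form a basis of `ℤ²`; these are the
  -- coordinates of `(a, b)` in it.
  set α := a * y - b * x with hα
  set Δ := c * b - a * d with hΔ
  have ha_eq : a = α * c + Δ * x := by linear_combination (-a) * hRQ
  have hb_eq : b = α * d + Δ * y := by linear_combination (-b) * hRQ
  have hα0 : α = 0 := by
    by_contra hne
    have hα1 : 1 ≤ α := by have := mul_comm b x; omega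
    -- then `(a, b) - (c, d) - (x, y)` has both box coordinates `≥ 0`, against maximality
    rcases hmax with h | h
    · nlinarith
    · nlinarith
  have hunit : IsUnit Δ := (Int.isCoprime_iff_gcd_eq_one.2 hab).isUnit_of_dvd'
    ⟨x, by rw [ha_eq, hα0]; ring⟩ ⟨y, by rw [hb_eq, hα0]; ring⟩
  exact (Int.isUnit_iff.1 hunit).resolve_right (by linarith)

theorem IsSuccIn.fareyB_mediant_exceeds_bounds {n m : ℕ} {a b c d : ℤ} (hb : 0 < b) (hd : 0 < d)
    (hab : Int.gcd a b = 1) (hcd : Int.gcd c d = 1)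
    (h : IsSuccIn (FareyB n m) ((a : ℚ) / b) ((c : ℚ) / d)) :
    (m : ℤ) < a + c ∨ (n : ℤ) - m < b + d - (a + c) := by
  have hdet := h.fareyB_det_eq_one hb hd hab hcd
  obtain ⟨ha, hab', -, -⟩ := (mem_fareyB_iff hb hab).1 h.1
  obtain ⟨hc, hcd', -, -⟩ := (mem_fareyB_iff hd hcd).1 h.2.1
  have hcop : Int.gcd (a + c) (b + d) = 1 :=
    Int.isCoprime_iff_gcd_eq_one.1 ⟨-d, c, by linear_combination hdet⟩
  by_contra! hin
  exact h.mediant_not_mem hb hd <|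
    (mem_fareyB_iff (by omega) hcop).2 ⟨by omega, by omega, hin.1, hin.2⟩

theorem stmt_9_general (n m : ℕ)
    (h₁ k₁ h₂ k₂ h₃ k₃ : ℤ)
    (hk₁ : 0 < k₁) (hk₂ : 0 < k₂) (hk₃ : 0 < k₃)
    (hc₁ : Int.gcd h₁ k₁ = 1) (hc₂ : Int.gcd h₂ k₂ = 1) (hc₃ : Int.gcd h₃ k₃ = 1)
    (hs₁ : IsSuccIn (FareyB n m) ((h₁ : ℚ) / (k₁ : ℚ)) ((h₂ : ℚ) / (k₂ : ℚ)))
    (hs₂ : IsSuccIn (FareyB n m) ((h₂ : ℚ) / (k₂ : ℚ)) ((h₃ : ℚ) / (k₃ : ℚ)))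
    (D : ℤ)
    (hD : D = ⌊min (min (((h₁ : ℚ) + (m : ℚ)) / (h₂ : ℚ))
        (((k₁ : ℚ) + (n : ℚ)) / (k₂ : ℚ)))
        (((k₁ : ℚ) - (h₁ : ℚ) + (n : ℚ) - (m : ℚ)) / ((k₂ : ℚ) - (h₂ : ℚ)))⌋) :
    h₃ = D * h₂ - h₁ ∧ k₃ = D * k₂ - k₁ := by
  have hdet₁ := hs₁.fareyB_det_eq_one hk₁ hk₂ hc₁ hc₂
  have hdet₂ := hs₂.fareyB_det_eq_one hk₂ hk₃ hc₂ hc₃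
  obtain ⟨h₁0, -, -, -⟩ := (mem_fareyB_iff hk₁ hc₁).1 hs₁.1
  obtain ⟨-, h₃k₃, h₃m, h₃nm⟩ := (mem_fareyB_iff hk₃ hc₃).1 hs₂.2.1
  have hout := hs₂.fareyB_mediant_exceeds_bounds hk₂ hk₃ hc₂ hc₃
  set a := h₃ * k₁ - h₁ * k₃
  have rec_h : h₃ = a * h₂ - h₁ := by linear_combination (-h₃) * hdet₁ + (-h₁) * hdet₂
  have rec_k : k₃ = a * k₂ - k₁ := by linear_combination (-k₃) * hdet₁ + (-k₁) * hdet₂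
  have hh₂ : (0 : ℚ) < h₂ := by exact_mod_cast (show 0 < h₂ by nlinarith)
  have hk₂' : (0 : ℚ) < k₂ := by exact_mod_cast hk₂
  have hkh₂ : (0 : ℚ) < k₂ - h₂ := by exact_mod_cast (show 0 < k₂ - h₂ by nlinarith)
  suffices D = a by exact this ▸ ⟨rec_h, rec_k⟩
  rw [hD, Int.floor_eq_iff, le_min_iff, le_min_iff, min_lt_iff, min_lt_iff,
    le_div_iff₀ hh₂, le_div_iff₀ hk₂', le_div_iff₀ hkh₂, div_lt_iff₀ hh₂, div_lt_iff₀ hkh₂]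
  refine ⟨⟨⟨?_, ?_⟩, ?_⟩, ?_⟩
  · exact_mod_cast (show a * h₂ ≤ h₁ + m by linarith)
  · exact_mod_cast (show a * k₂ ≤ k₁ + n by omega)
  · exact_mod_cast (show a * (k₂ - h₂) ≤ k₁ - h₁ + n - m by linarith)
  · rcases hout with h | h
    · exact Or.inl (Or.inl (by exact_mod_cast (show h₁ + m < (a + 1) * h₂ by linarith)))
    · exact Or.inr (by exact_mod_cast (show k₁ - h₁ + n - m < (a + 1) * (k₂ - h₂) by linarith))

/-- Recurrence for the right neighbor among three successive fractions of
`F(B(n),m)` (Lemma: [AM, Proposition 7.8(ii)]). -/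
theorem stmt_9 (n m : ℕ) (hm : 0 < m) (hmn : m < n)
    (h₁ k₁ h₂ k₂ h₃ k₃ : ℤ)
    (hk₁ : 0 < k₁) (hk₂ : 0 < k₂) (hk₃ : 0 < k₃)
    (hc₁ : Int.gcd h₁ k₁ = 1) (hc₂ : Int.gcd h₂ k₂ = 1) (hc₃ : Int.gcd h₃ k₃ = 1)
    (hm₁ : (h₁ : ℚ) / (k₁ : ℚ) ∈ FareyB n m)
    (hm₂ : (h₂ : ℚ) / (k₂ : ℚ) ∈ FareyB n m)
    (hm₃ : (h₃ : ℚ) / (k₃ : ℚ) ∈ FareyB n m)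
    (hs₁ : IsSuccIn (FareyB n m) ((h₁ : ℚ) / (k₁ : ℚ)) ((h₂ : ℚ) / (k₂ : ℚ)))
    (hs₂ : IsSuccIn (FareyB n m) ((h₂ : ℚ) / (k₂ : ℚ)) ((h₃ : ℚ) / (k₃ : ℚ)))
    (D : ℤ)
    (hD : D = ⌊min (min (((h₁ : ℚ) + (m : ℚ)) / (h₂ : ℚ))
        (((k₁ : ℚ) + (n : ℚ)) / (k₂ : ℚ)))
        (((k₁ : ℚ) - (h₁ : ℚ) + (n : ℚ) - (m : ℚ)) / ((k₂ : ℚ) - (h₂ : ℚ)))⌋) :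
    h₃ = D * h₂ - h₁ ∧ k₃ = D * k₂ - k₁ :=
  stmt_9_general n m h₁ k₁ h₂ k₂ h₃ k₃ hk₁ hk₂ hk₃ hc₁ hc₂ hc₃ hs₁ hs₂ D hD
end

section
/- Let m ≥ 1 be an integer and let h/k be a fraction in lowest terms belonging to F(B(2m),m) with h/k > 1/2. Let x₀ be the integer satisfying k·x₀ ≡ −1 (mod h) and m−h+1 ≤ x₀ ≤ m. Then the fraction x₀ / ((k·x₀+1)/h) is the predecessor of h/k in F(B(2m),m). -/
set_option maxHeartbeats 1600000 in
/-- Predecessor formula in `F(B(2m),m)` for fractions `h/k > 1/2`. -/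
theorem stmt_10 (m : ℕ) (hm : 1 ≤ m)
    (h k : ℤ) (hk : 0 < k) (hcop : Int.gcd h k = 1)
    (hmem : (h : ℚ) / (k : ℚ) ∈ FareyB (2 * m) m)
    (hgt : 1 / 2 < (h : ℚ) / (k : ℚ))
    (x₀ : ℤ) (hx₁ : k * x₀ ≡ -1 [ZMOD h])
    (hx₂ : (m : ℤ) - h + 1 ≤ x₀) (hx₃ : x₀ ≤ (m : ℤ)) :
    IsPredIn (FareyB (2 * m) m)
      ((x₀ : ℚ) / (((k * x₀ + 1 : ℤ) : ℚ) / (h : ℚ)))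
      ((h : ℚ) / (k : ℚ)) := by
  have hkQ : (0 : ℚ) < (k : ℚ) := by exact_mod_cast hk
  -- h is positive and k < 2h
  have hk2 : k < 2 * h := by
    rw [div_lt_div_iff₀ (by norm_num) hkQ] at hgt
    have : (k : ℚ) < 2 * h := by linarith
    exact_mod_cast this
  have hpos : 0 < h := by linarith
  have hhQ : (0 : ℚ) < (h : ℚ) := by exact_mod_cast hpos
  -- unpack membership of h/k
  obtain ⟨hq0, hq1, hqden, hqnum, hqd⟩ := hmem
  have hnum : ((h : ℚ) / (k : ℚ)).num = h :=
    Rat.num_div_eq_of_coprime hk hcop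
  have hden : (((h : ℚ) / (k : ℚ)).den : ℤ) = k :=
    Rat.den_div_eq_of_coprime hk hcop
  rw [hnum] at hqnum hqd
  rw [hden] at hqd
  have hdenk : ((h : ℚ) / (k : ℚ)).den ≤ 2 * m := hqden
  have hle : h ≤ k := by
    rw [div_le_one hkQ] at hq1
    exact_mod_cast hq1
  have hhm : h ≤ (m : ℤ) := hqnum
  have hkhm : k - h ≤ (m : ℤ) := by
    have : (2 * m : ℤ) - m = m := by push_cast; ring
    calc k - h ≤ (2 * m : ℤ) - m := hqd
    _ = m := by push_cast; ring
  -- x₀ ≥ 1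
  have hx0pos : 1 ≤ x₀ := by linarith
  -- h ∣ k x₀ + 1
  have hdvd : h ∣ k * x₀ + 1 := by
    have := hx₁.dvd
    have h2 : h ∣ -1 - k * x₀ := this
    have := dvd_neg.mpr h2
    simpa [neg_sub, sub_neg_eq_add, add_comm] using this
  obtain ⟨y₀, hy⟩ := hdvd
  -- determinant
  have det : h * y₀ - k * x₀ = 1 := by rw [← hy]; ring
  have hy0pos : 0 < y₀ := by nlinarith
  have hdiff1 : 1 ≤ y₀ - x₀ := by nlinarith
  have hdiffm : y₀ - x₀ ≤ (m : ℤ) := by nlinarith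
  have hy0le : y₀ ≤ 2 * (m : ℤ) := by linarith
  have hyQ : (0 : ℚ) < (y₀ : ℚ) := by exact_mod_cast hy0pos
  -- the fraction in the statement equals x₀ / y₀
  have hexpr : (((k * x₀ + 1 : ℤ) : ℚ) / (h : ℚ)) = (y₀ : ℚ) := by
    rw [hy]; push_cast; field_simp
  rw [hexpr]
  -- coprimality of x₀, y₀
  have hcop' : Nat.Coprime x₀.natAbs y₀.natAbs := by
    have : IsCoprime x₀ y₀ := ⟨-k, h, by linarith [det]⟩
    exact Int.isCoprime_iff_gcd_eq_one.mp this
  have hnum' : ((x₀ : ℚ) / (y₀ : ℚ)).num = x₀ :=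
    Rat.num_div_eq_of_coprime hy0pos hcop'
  have hden' : (((x₀ : ℚ) / (y₀ : ℚ)).den : ℤ) = y₀ :=
    Rat.den_div_eq_of_coprime hy0pos hcop'
  refine ⟨?_, ⟨hq0, hq1, hqden, by rw [hnum]; exact hhm, by rw [hnum, hden]; push_cast; linarith⟩, ?_, ?_⟩
  · refine ⟨?_, ?_, ?_, ?_, ?_⟩
    · positivity
    · rw [div_le_one hyQ]; exact_mod_cast by linarith
    · have : (((x₀ : ℚ) / (y₀ : ℚ)).den : ℤ) ≤ (2 * m : ℤ) := by rw [hden']; exact_mod_cast hy0le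
      exact_mod_cast this
    · rw [hnum']; exact hx₃
    · rw [hnum', hden']; push_cast; linarith
  · rw [div_lt_div_iff₀ hyQ hkQ]
    exact_mod_cast by nlinarith [det]
  · rintro g ⟨hg0, hg1, hgden, hgnum, hgd⟩ ⟨hlt1, hlt2⟩
    set p := g.num with hp
    set q := (g.den : ℤ) with hq
    clear_value p q
    have hqpos : 0 < q := by rw [hq]; exact_mod_cast g.pos
    have hgeq : g = (p : ℚ) / (q : ℚ) := by
      rw [hp, hq]; push_cast; exact (Rat.num_div_den g).symm
    rw [hgeq] at hlt1 hlt2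
    have hqQ : (0 : ℚ) < (q : ℚ) := by exact_mod_cast hqpos
    have e1 : x₀ * q < p * y₀ := by
      rw [div_lt_div_iff₀ hyQ hqQ] at hlt1
      exact_mod_cast hlt1
    have e2 : p * k < h * q := by
      rw [div_lt_div_iff₀ hqQ hkQ] at hlt2
      exact_mod_cast hlt2
    have e1' : 1 ≤ p * y₀ - x₀ * q := by
      have := Int.add_one_le_iff.mpr e1
      linarith
    have e2' : 1 ≤ h * q - p * k := by
      have := Int.add_one_le_iff.mpr e2
      linarith
    have key : p = h * (p * y₀ - x₀ * q) + x₀ * (h * q - p * k) := by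
      linear_combination -p * det
    have A1 : h ≤ h * (p * y₀ - x₀ * q) := le_mul_of_one_le_right hpos.le e1'
    have A2 : x₀ ≤ x₀ * (h * q - p * k) := le_mul_of_one_le_right (by linarith) e2'
    have : (m : ℤ) + 1 ≤ p := by linarith
    linarith [hgnum]
end

section
/- Let m ≥ 1 be an integer and let h/k be a fraction in lowest terms belonging to F(B(2m),m) with 1/2 ≤ h/k < 1/1. Let x₀ be the integer satisfying k·x₀ ≡ 1 (mod h) and m−h+1 ≤ x₀ ≤ m. Then the fraction x₀ / ((k·x₀−1)/h) is the successor of h/k in F(B(2m),m). In particular, the fraction m/(2m−1) is the successor of 1/2 in F(B(2m),m). -/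
theorem Rat.add_le_num_of_lt_of_lt {h k x y : ℤ} (hh : 0 ≤ h) (hx : 0 ≤ x) (hk : 0 < k)
    (hy : 0 < y) (hdet : k * x - h * y = 1) {q : ℚ} (hlo : (h : ℚ) / k < q)
    (hhi : q < (x : ℚ) / y) : h + x ≤ q.num := by
  have hb : (0 : ℚ) < (q.den : ℤ) := by exact_mod_cast q.pos
  rw [← Rat.num_div_den q, ← Int.cast_natCast] at hlo hhi
  rw [div_lt_div_iff₀ (by exact_mod_cast hk) hb] at hlo
  rw [div_lt_div_iff₀ hb (by exact_mod_cast hy)] at hhi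
  have hlo' : h * q.den < q.num * k := by exact_mod_cast hlo
  have hhi' : q.num * y < x * q.den := by exact_mod_cast hhi
  have hnum : q.num = (q.num * k - h * q.den) * x + (x * q.den - q.num * y) * h := by
    linear_combination (-q.num) * hdet
  nlinarith

namespace FareyB

theorem div_mem {n m : ℕ} {x y : ℤ} (hy : 0 < y) (hcop : Int.gcd x y = 1) (hx : 0 ≤ x)
    (hxy : x ≤ y) (hyn : y ≤ n) (hxm : x ≤ m) (hdiff : y - x ≤ (n : ℤ) - m) :
    (x : ℚ) / y ∈ FareyB n m := by
  have hnum := Rat.num_div_eq_of_coprime hy hcop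
  have hden := Rat.den_div_eq_of_coprime hy hcop
  refine ⟨by positivity, (div_le_one (by exact_mod_cast hy)).2 (by exact_mod_cast hxy), ?_, ?_, ?_⟩
  · exact_mod_cast hden ▸ hyn
  · rwa [hnum]
  · rwa [hnum, hden]

theorem num_le_of_div_mem {n m : ℕ} {h k : ℤ} (hk : 0 < k) (hcop : Int.gcd h k = 1)
    (hmem : (h : ℚ) / k ∈ FareyB n m) : h ≤ m :=
  Rat.num_div_eq_of_coprime hk hcop ▸ hmem.2.2.2.1

theorem isSuccIn_of_det_eq_one {n m : ℕ} {h k x y : ℤ} (hh : 0 ≤ h) (hx : 0 ≤ x) (hk : 0 < k)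
    (hy : 0 < y) (hdet : k * x - h * y = 1) (hm : m < h + x) (hhk : (h : ℚ) / k ∈ FareyB n m)
    (hxy : (x : ℚ) / y ∈ FareyB n m) : IsSuccIn (FareyB n m) ((h : ℚ) / k) ((x : ℚ) / y) := by
  refine ⟨hhk, hxy, ?_, fun g hg ⟨hlo, hhi⟩ => ?_⟩
  · rw [div_lt_div_iff₀ (by exact_mod_cast hk) (by exact_mod_cast hy)]
    exact_mod_cast (by linarith : h * y < x * k)
  · have := Rat.add_le_num_of_lt_of_lt hh hx hk hy hdet hlo hhi
    linarith [hg.2.2.2.1]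

theorem isSuccIn_two_mul {m : ℕ} {h k x y : ℤ} (hk : 0 < k) (hcop : Int.gcd h k = 1)
    (hmem : (h : ℚ) / k ∈ FareyB (2 * m) m) (hhalf : 1 / 2 ≤ (h : ℚ) / k)
    (hlt : (h : ℚ) / k < 1) (hdet : k * x - h * y = 1) (hxlo : (m : ℤ) - h + 1 ≤ x)
    (hxhi : x ≤ m) : IsSuccIn (FareyB (2 * m) m) ((h : ℚ) / k) ((x : ℚ) / y) := by
  have hkQ : (0 : ℚ) < k := by exact_mod_cast hk
  have hhm := num_le_of_div_mem hk hcop hmem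
  have hkh : k ≤ 2 * h := by
    rw [div_le_div_iff₀ two_pos hkQ] at hhalf
    exact_mod_cast (by linarith : (k : ℚ) ≤ 2 * h)
  have hhk : h < k := by exact_mod_cast (div_lt_one hkQ).1 hlt
  have hx : 1 ≤ x := by linarith
  have hxy : x ≤ y := by nlinarith
  have hyx : y - x < m := by nlinarith
  have hxycop : Int.gcd x y = 1 := Int.isCoprime_iff_gcd_eq_one.1 ⟨k, -h, by linarith⟩
  refine isSuccIn_of_det_eq_one (by linarith) (by linarith) hk (by linarith) hdet (by linarith)
    hmem (div_mem (by linarith) hxycop (by linarith) hxy ?_ hxhi ?_) <;> push_cast <;> linarith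

end FareyB

/-- Successor formula in `F(B(2m),m)` for fractions `1/2 ≤ h/k < 1`; in
particular, `m/(2m-1)` is the successor of `1/2`. -/
theorem stmt_11 (m : ℕ) (hm : 1 ≤ m) :
    (∀ h k : ℤ, 0 < k → Int.gcd h k = 1 →
      (h : ℚ) / (k : ℚ) ∈ FareyB (2 * m) m →
      1 / 2 ≤ (h : ℚ) / (k : ℚ) → (h : ℚ) / (k : ℚ) < 1 →
      ∀ x₀ : ℤ, k * x₀ ≡ 1 [ZMOD h] →
        (m : ℤ) - h + 1 ≤ x₀ → x₀ ≤ (m : ℤ) →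
        IsSuccIn (FareyB (2 * m) m) ((h : ℚ) / (k : ℚ))
          ((x₀ : ℚ) / (((k * x₀ - 1 : ℤ) : ℚ) / (h : ℚ)))) ∧
    IsSuccIn (FareyB (2 * m) m) (1 / 2) ((m : ℚ) / (2 * (m : ℚ) - 1)) := by
  refine ⟨fun h k hk hcop hmem hhalf hlt x₀ hx₀ hxlo hxhi => ?_, ?_⟩
  · obtain ⟨y₀, hy₀⟩ := hx₀.symm.dvd
    have hh : (h : ℚ) ≠ 0 := fun h0 => by rw [h0, zero_div] at hhalf; norm_num at hhalf
    rw [hy₀, Int.cast_mul, mul_div_cancel_left₀ _ hh]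
    exact FareyB.isSuccIn_two_mul hk hcop hmem hhalf hlt (by linarith) hxlo hxhi
  · have hhalf : ((1 : ℤ) : ℚ) / (2 : ℤ) ∈ FareyB (2 * m) m :=
      FareyB.div_mem two_pos rfl zero_le_one one_le_two (by omega) (by omega) (by omega)
    have := FareyB.isSuccIn_two_mul (y := 2 * m - 1) two_pos rfl hhalf (by norm_num)
      (by norm_num) (by ring) (by omega) le_rfl
    push_cast at this
    simpa using this
end

section
/- Let m > 1 be an integer and let h_j/k_j < h_{j+1}/k_{j+1} < h_{j+2}/k_{j+2} be three successive fractions of F(B(2m),m), i.e. each is the successor of the preceding one (all fractions in lowest terms), and suppose h_j/k_j ≥ 1/2. Then h_j = ⌊(h_{j+2}+m)/h_{j+1}⌋·h_{j+1} − h_{j+2}, k_j = ⌊(h_{j+2}+m)/h_{j+1}⌋·k_{j+1} − k_{j+2}, h_{j+2} = ⌊(h_j+m)/h_{j+1}⌋·h_{j+1} − h_j, and k_{j+2} = ⌊(h_j+m)/h_{j+1}⌋·k_{j+1} − k_j. -/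
/-! If `h/k ≥ 1/2` lies in `F(B(2m),m)` and is not `1`, Bézout gives `p/q` with `pk - hq = 1`
and `m - h < p ≤ m`. This fraction lies in `F(B(2m),m)`, and every fraction `a/b` strictly
between `h/k` and `p/q` has `a = p(ak - hb) + h(pb - aq) ≥ p + h > m`, so `p/q` is the successor
of `h/k`. Hence successive fractions satisfy `h₂k₁ - h₁k₂ = 1` and `m < h₁ + h₂`. Two such
relations give `h₁ + h₃ = r h₂` and `k₁ + k₃ = r k₂` with `r = h₃k₁ - h₁k₃`, and the bounds
`h₁, h₃ ≤ m < h₁ + h₂, h₂ + h₃` identify `r` with both floors. -/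

lemma div_mem_fareyB_iff {n m : ℕ} {h k : ℤ} (hk : 0 < k) (hc : Int.gcd h k = 1) :
    (h : ℚ) / k ∈ FareyB n m ↔ 0 ≤ h ∧ h ≤ k ∧ k ≤ n ∧ h ≤ m ∧ k - h ≤ n - m := by
  have hkQ : (0 : ℚ) < k := by exact_mod_cast hk
  have hden : (((h : ℚ) / k).den : ℤ) = k := Rat.den_div_eq_of_coprime hk hc
  have hnonneg : 0 ≤ (h : ℚ) / k ↔ 0 ≤ h := by
    rw [le_div_iff₀ hkQ, zero_mul, Int.cast_nonneg_iff]
  have hle : (h : ℚ) / k ≤ 1 ↔ h ≤ k := by rw [div_le_one hkQ, Int.cast_le]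
  have hden_le : ((h : ℚ) / k).den ≤ n ↔ k ≤ n := by rw [← Nat.cast_le (α := ℤ), hden]
  simp only [FareyB, Set.mem_ofPred_eq, Rat.num_div_eq_of_coprime hk hc, hden, hnonneg, hle,
    hden_le]

lemma IsSuccIn.unique {S : Set ℚ} {x y z : ℚ} (hy : IsSuccIn S x y) (hz : IsSuccIn S x z) :
    y = z := by
  rcases lt_trichotomy y z with h | h | h
  · exact absurd ⟨hy.2.2.1, h⟩ (hz.2.2.2 y hy.2.1)
  · exact h
  · exact absurd ⟨hz.2.2.1, h⟩ (hy.2.2.2 z hz.2.1)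

lemma exists_mul_sub_mul_eq_one_and_mem_Ioc {h k : ℤ} (hc : Int.gcd h k = 1) (hh : 0 < h)
    (c : ℤ) : ∃ p q : ℤ, p * k - h * q = 1 ∧ p ∈ Set.Ioc (c - h) c := by
  obtain ⟨u, v, huv⟩ := Int.isCoprime_iff_gcd_eq_one.mpr hc
  set t := (v - (c - h + 1)) / h
  have hp : v - h * t = c - h + 1 + (v - (c - h + 1)) % h := by rw [Int.emod_def]; ring
  have hr₀ : 0 ≤ (v - (c - h + 1)) % h := Int.emod_nonneg _ hh.ne'
  have hr₁ : (v - (c - h + 1)) % h < h := Int.emod_lt_of_pos _ hh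
  exact ⟨v - h * t, -u - k * t, by linear_combination huv, by omega, by omega⟩

lemma add_le_of_mul_sub_mul_eq_one {h k p q a b : ℤ} (hdet : p * k - h * q = 1)
    (hh : 0 ≤ h) (hp : 0 ≤ p) (hleft : h * b < a * k) (hright : a * q < p * b) :
    p + h ≤ a :=
  calc p + h ≤ p * (a * k - h * b) + h * (p * b - a * q) :=
        add_le_add (le_mul_of_one_le_right hp (by omega)) (le_mul_of_one_le_right hh (by omega))
    _ = a := by linear_combination a * hdet

lemma den_bounds_of_mul_sub_mul_eq_one {h k p q : ℤ} (hdet : p * k - h * q = 1)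
    (hh : 0 < h) (hlt : h < k) (hhalf : k ≤ 2 * h) (hp : 0 < p) :
    0 < q ∧ p ≤ q ∧ q < 2 * p := by
  have hq : 0 < q := by nlinarith
  exact ⟨hq, by nlinarith, by nlinarith⟩

lemma isSuccIn_fareyB_of_mul_sub_mul_eq_one {m : ℕ} {h k p q : ℤ} (hk : 0 < k)
    (hc : Int.gcd h k = 1) (hmem : (h : ℚ) / k ∈ FareyB (2 * m) m) (hlt : h < k)
    (hhalf : k ≤ 2 * h) (hdet : p * k - h * q = 1) (hp : p ∈ Set.Ioc (m - h : ℤ) m) :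
    IsSuccIn (FareyB (2 * m) m) ((h : ℚ) / k) ((p : ℚ) / q) := by
  obtain ⟨-, -, -, hhm, -⟩ := (div_mem_fareyB_iff hk hc).1 hmem
  obtain ⟨hmp, hpm⟩ := hp
  obtain ⟨hq, hpq, hq2p⟩ := den_bounds_of_mul_sub_mul_eq_one hdet (by omega) hlt hhalf
    (by omega)
  have hcpq : Int.gcd p q = 1 :=
    Int.isCoprime_iff_gcd_eq_one.mp ⟨k, -h, by linear_combination hdet⟩
  have hkQ : (0 : ℚ) < k := by exact_mod_cast hk
  have hqQ : (0 : ℚ) < q := by exact_mod_cast hq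
  refine ⟨hmem, (div_mem_fareyB_iff hq hcpq).2 ⟨by omega, hpq, ?_, hpm, ?_⟩, ?_, ?_⟩
  · push_cast; omega
  · push_cast; omega
  · rw [div_lt_div_iff₀ hkQ hqQ]
    exact_mod_cast (by linarith : h * q < p * k)
  · rintro g hg ⟨hhg, hgp⟩
    obtain ⟨a, b, hb, hab, rfl⟩ : ∃ a b : ℤ, 0 < b ∧ Int.gcd a b = 1 ∧ g = a / b :=
      ⟨g.num, g.den, by exact_mod_cast g.pos, g.reduced,
        by push_cast; exact (Rat.num_div_den g).symm⟩
    have hbQ : (0 : ℚ) < b := by exact_mod_cast hb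
    rw [div_lt_div_iff₀ hkQ hbQ] at hhg
    rw [div_lt_div_iff₀ hbQ hqQ] at hgp
    have hph : p + h ≤ a :=
      add_le_of_mul_sub_mul_eq_one hdet (by omega) (by omega) (by exact_mod_cast hhg)
        (by exact_mod_cast hgp)
    have ham := ((div_mem_fareyB_iff hb hab).1 hg).2.2.2.1
    omega

lemma mul_sub_mul_eq_one_of_isSuccIn_fareyB {m : ℕ} {h₁ k₁ h₂ k₂ : ℤ} (hk₁ : 0 < k₁)
    (hk₂ : 0 < k₂) (hc₁ : Int.gcd h₁ k₁ = 1) (hc₂ : Int.gcd h₂ k₂ = 1)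
    (hs : IsSuccIn (FareyB (2 * m) m) ((h₁ : ℚ) / k₁) ((h₂ : ℚ) / k₂))
    (hge : 1 / 2 ≤ (h₁ : ℚ) / k₁) :
    h₂ * k₁ - h₁ * k₂ = 1 ∧ (m : ℤ) < h₁ + h₂ := by
  have hk₁Q : (0 : ℚ) < k₁ := by exact_mod_cast hk₁
  obtain ⟨-, -, -, hh₁m, -⟩ := (div_mem_fareyB_iff hk₁ hc₁).1 hs.1
  have hhalf : k₁ ≤ 2 * h₁ := by
    rw [div_le_div_iff₀ two_pos hk₁Q] at hge
    exact_mod_cast (by linarith : (k₁ : ℚ) ≤ 2 * h₁)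
  have hlt : h₁ < k₁ := by
    have hlt_one : (h₁ : ℚ) / k₁ < 1 := hs.2.2.1.trans_le hs.2.1.2.1
    exact_mod_cast (div_lt_one hk₁Q).1 hlt_one
  obtain ⟨p, q, hdet, hp⟩ := exists_mul_sub_mul_eq_one_and_mem_Ioc hc₁ (by omega) m
  have hsucc := isSuccIn_fareyB_of_mul_sub_mul_eq_one hk₁ hc₁ hs.1 hlt hhalf hdet hp
  obtain ⟨hmp, -⟩ := hp
  have hq := (den_bounds_of_mul_sub_mul_eq_one hdet (by omega) hlt hhalf (by omega)).1
  have hcpq : Int.gcd p q = 1 :=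
    Int.isCoprime_iff_gcd_eq_one.mp ⟨k₁, -h₁, by linear_combination hdet⟩
  obtain ⟨rfl, rfl⟩ := Rat.div_int_inj hk₂ hq hc₂ hcpq (hs.unique hsucc)
  exact ⟨hdet, by omega⟩

lemma add_eq_mul_of_mul_sub_mul_eq_one {h₁ k₁ h₂ k₂ h₃ k₃ : ℤ}
    (h₁₂ : h₂ * k₁ - h₁ * k₂ = 1) (h₂₃ : h₃ * k₂ - h₂ * k₃ = 1) :
    h₁ + h₃ = (h₃ * k₁ - h₁ * k₃) * h₂ ∧ k₁ + k₃ = (h₃ * k₁ - h₁ * k₃) * k₂ :=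
  ⟨by linear_combination (-h₃) * h₁₂ - h₁ * h₂₃, by linear_combination (-k₃) * h₁₂ - k₁ * h₂₃⟩

lemma Int.floor_intCast_div_eq_of_mul_le_of_lt {K : Type*} [Field K] [LinearOrder K]
    [IsStrictOrderedRing K] [FloorRing K] {a b r : ℤ} (hb : 0 < b) (hle : r * b ≤ a)
    (hlt : a < (r + 1) * b) : ⌊(a : K) / b⌋ = r := by
  have hbK : (0 : K) < b := by exact_mod_cast hb
  rw [Int.floor_eq_iff, le_div_iff₀ hbK, div_lt_iff₀ hbK]
  exact ⟨by exact_mod_cast hle, by exact_mod_cast hlt⟩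

theorem stmt_12_general (m : ℕ)
    (h₁ k₁ h₂ k₂ h₃ k₃ : ℤ)
    (hk₁ : 0 < k₁) (hk₂ : 0 < k₂) (hk₃ : 0 < k₃)
    (hc₁ : Int.gcd h₁ k₁ = 1) (hc₂ : Int.gcd h₂ k₂ = 1) (hc₃ : Int.gcd h₃ k₃ = 1)
    (hs₁ : IsSuccIn (FareyB (2 * m) m) ((h₁ : ℚ) / (k₁ : ℚ)) ((h₂ : ℚ) / (k₂ : ℚ)))
    (hs₂ : IsSuccIn (FareyB (2 * m) m) ((h₂ : ℚ) / (k₂ : ℚ)) ((h₃ : ℚ) / (k₃ : ℚ)))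
    (hge : 1 / 2 ≤ (h₁ : ℚ) / (k₁ : ℚ)) :
    h₁ = ⌊((h₃ : ℚ) + (m : ℚ)) / (h₂ : ℚ)⌋ * h₂ - h₃ ∧
    k₁ = ⌊((h₃ : ℚ) + (m : ℚ)) / (h₂ : ℚ)⌋ * k₂ - k₃ ∧
    h₃ = ⌊((h₁ : ℚ) + (m : ℚ)) / (h₂ : ℚ)⌋ * h₂ - h₁ ∧
    k₃ = ⌊((h₁ : ℚ) + (m : ℚ)) / (h₂ : ℚ)⌋ * k₂ - k₁ := by
  obtain ⟨hdet₁₂, hm₁₂⟩ := mul_sub_mul_eq_one_of_isSuccIn_fareyB hk₁ hk₂ hc₁ hc₂ hs₁ hge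
  obtain ⟨hdet₂₃, hm₂₃⟩ := mul_sub_mul_eq_one_of_isSuccIn_fareyB hk₂ hk₃ hc₂ hc₃ hs₂
    (hge.trans hs₁.2.2.1.le)
  have hh₁m := ((div_mem_fareyB_iff hk₁ hc₁).1 hs₁.1).2.2.2.1
  have hh₃m := ((div_mem_fareyB_iff hk₃ hc₃).1 hs₂.2.1).2.2.2.1
  obtain ⟨hh, hk⟩ := add_eq_mul_of_mul_sub_mul_eq_one hdet₁₂ hdet₂₃
  set r := h₃ * k₁ - h₁ * k₃
  have hh₂ : 0 < h₂ := by omega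
  have hfloor₁ : ⌊((h₁ : ℚ) + m) / h₂⌋ = r := by
    simpa using Int.floor_intCast_div_eq_of_mul_le_of_lt (K := ℚ) (a := h₁ + m) hh₂
      (by linarith) (by linarith)
  have hfloor₃ : ⌊((h₃ : ℚ) + m) / h₂⌋ = r := by
    simpa using Int.floor_intCast_div_eq_of_mul_le_of_lt (K := ℚ) (a := h₃ + m) hh₂
      (by linarith) (by linarith)
  rw [hfloor₁, hfloor₃]
  exact ⟨by linarith, by linarith, by linarith, by linarith⟩

/-- Recurrences among three successive fractions of `F(B(2m),m)` lying in the
right halfsequence (`h_j/k_j ≥ 1/2`). -/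
theorem stmt_12 (m : ℕ) (hm : 1 < m)
    (h₁ k₁ h₂ k₂ h₃ k₃ : ℤ)
    (hk₁ : 0 < k₁) (hk₂ : 0 < k₂) (hk₃ : 0 < k₃)
    (hc₁ : Int.gcd h₁ k₁ = 1) (hc₂ : Int.gcd h₂ k₂ = 1) (hc₃ : Int.gcd h₃ k₃ = 1)
    (hm₁ : (h₁ : ℚ) / (k₁ : ℚ) ∈ FareyB (2 * m) m)
    (hm₂ : (h₂ : ℚ) / (k₂ : ℚ) ∈ FareyB (2 * m) m)
    (hm₃ : (h₃ : ℚ) / (k₃ : ℚ) ∈ FareyB (2 * m) m)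
    (hs₁ : IsSuccIn (FareyB (2 * m) m) ((h₁ : ℚ) / (k₁ : ℚ)) ((h₂ : ℚ) / (k₂ : ℚ)))
    (hs₂ : IsSuccIn (FareyB (2 * m) m) ((h₂ : ℚ) / (k₂ : ℚ)) ((h₃ : ℚ) / (k₃ : ℚ)))
    (hge : 1 / 2 ≤ (h₁ : ℚ) / (k₁ : ℚ)) :
    h₁ = ⌊((h₃ : ℚ) + (m : ℚ)) / (h₂ : ℚ)⌋ * h₂ - h₃ ∧
    k₁ = ⌊((h₃ : ℚ) + (m : ℚ)) / (h₂ : ℚ)⌋ * k₂ - k₃ ∧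
    h₃ = ⌊((h₁ : ℚ) + (m : ℚ)) / (h₂ : ℚ)⌋ * h₂ - h₁ ∧
    k₃ = ⌊((h₁ : ℚ) + (m : ℚ)) / (h₂ : ℚ)⌋ * k₂ - k₁ :=
  stmt_12_general m h₁ k₁ h₂ k₂ h₃ k₃ hk₁ hk₂ hk₃ hc₁ hc₂ hc₃ hs₁ hs₂ hge
end

section
/- Let m > 1 be an integer, and index the elements of F(B(2m),m) in ascending order as f₀ < f₁ < f₂ < ⋯ with f₀ = 0/1. Let s and t be the indices with f_s = 1/2 and f_t = 2/3. Then for every integer v with 0 ≤ v ≤ t−s, the numerators of f_{t+v} and f_{t−v} (in lowest terms) are equal, and den(f_{t+v}) + den(f_{t−v}) = 3·num(f_{t+v}), where num and den denote numerator and denominator in lowest terms. -/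
/-!
The map `q ↦ q / (3q - 1)`, i.e. `h/k ↦ h/(3h - k)` in lowest terms, sends `F(B(2m),m) ∩ [1/2, 1]`
into itself, reverses order there and fixes `2/3`. A strictly decreasing self-map of a finite
chain is the reversal of the chain, so it exchanges `f_{t-v}` and `f_{t+v}`; its effect on
numerators and denominators is the claimed relation.
-/

open Set

theorem StrictAntiOn.add_sub_le_nat {φ : ℕ → ℕ} {a b : ℕ} (hφ : StrictAntiOn φ (Icc a b))
    {i j : ℕ} (hi : a ≤ i) (hj : j ≤ b) (hij : i ≤ j) : φ j + (j - i) ≤ φ i := by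
  induction j, hij using Nat.le_induction with
  | base => simp
  | succ j hij ih =>
    have hlt : φ (j + 1) < φ j := hφ ⟨by omega, by omega⟩ ⟨by omega, hj⟩ (Nat.lt_succ_self j)
    have := ih (by omega)
    omega

theorem Nat.eq_add_sub_of_strictAntiOn_Icc {φ : ℕ → ℕ} {a b : ℕ}
    (hmaps : MapsTo φ (Icc a b) (Icc a b)) (hφ : StrictAntiOn φ (Icc a b))
    {i : ℕ} (hi : i ∈ Icc a b) : φ i = a + b - i := by
  have hab : a ≤ b := hi.1.trans hi.2
  have hfirst := hφ.add_sub_le_nat le_rfl hi.2 hi.1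
  have hlast := hφ.add_sub_le_nat hi.1 le_rfl hi.2
  have ha := hmaps ⟨le_rfl, hab⟩
  have hb := hmaps ⟨hab, le_rfl⟩
  simp only [mem_Icc] at ha hb
  omega

theorem StrictMonoOn.apply_eq_of_strictAntiOn {α : Type*} [LinearOrder α] {f : ℕ → α}
    {σ : α → α} {a b : ℕ} (hf : StrictMonoOn f (Icc a b))
    (hmaps : MapsTo σ (f '' Icc a b) (f '' Icc a b)) (hσ : StrictAntiOn σ (f '' Icc a b))
    {i : ℕ} (hi : i ∈ Icc a b) : σ (f i) = f (a + b - i) := by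
  choose! φ hφ hfφ using fun j (hj : j ∈ Icc a b) => hmaps (mem_image_of_mem f hj)
  have hanti : StrictAntiOn φ (Icc a b) := fun j hj k hk hjk => by
    have := hσ (mem_image_of_mem f hj) (mem_image_of_mem f hk) (hf hj hk hjk)
    rwa [← hfφ j hj, ← hfφ k hk, hf.lt_iff_lt (hφ k hk) (hφ j hj)] at this
  rw [← hfφ i hi, Nat.eq_add_sub_of_strictAntiOn_Icc hφ hanti hi]

theorem StrictMonoOn.apply_add_eq_of_strictAntiOn {α : Type*} [LinearOrder α] {f : ℕ → α}
    {σ : α → α} {a b : ℕ} (hf : StrictMonoOn f (Icc a b))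
    (hmaps : MapsTo σ (f '' Icc a b) (f '' Icc a b)) (hσ : StrictAntiOn σ (f '' Icc a b))
    {t v : ℕ} (ht : t ∈ Icc a b) (hfix : σ (f t) = f t) (hv : v ≤ t - a) :
    f (t + v) = σ (f (t - v)) := by
  have ⟨hat, htb⟩ := ht
  have hcentre : a + b - t = t := hf.injOn (by simp only [mem_Icc]; omega) ht
    (by rw [← hf.apply_eq_of_strictAntiOn hmaps hσ ht, hfix])
  rw [hf.apply_eq_of_strictAntiOn hmaps hσ ⟨by omega, by omega⟩]
  congr 1
  omega

theorem image_Icc_eq_inter_Ici {α : Type*} [LinearOrder α] {S : Set α} {f : ℕ → α} {N s : ℕ}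
    (henum : ∀ x, x ∈ S ↔ ∃ i ≤ N, f i = x) (hf : StrictMonoOn f (Iic N)) (hs : s ≤ N) :
    f '' Icc s N = S ∩ Ici (f s) := by
  ext x
  constructor
  · rintro ⟨i, hi, rfl⟩
    exact ⟨(henum _).2 ⟨i, hi.2, rfl⟩, hf.monotoneOn hs hi.2 hi.1⟩
  · rintro ⟨hx, hsx⟩
    obtain ⟨i, hi, rfl⟩ := (henum x).1 hx
    exact ⟨i, ⟨(hf.le_iff_le hs hi).1 hsx, hi⟩, rfl⟩

def fareyReflect (q : ℚ) : ℚ := q / (3 * q - 1)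

theorem fareyReflect_strictAntiOn : StrictAntiOn fareyReflect (Ioi (1 / 3)) := by
  intro a ha b hb hab
  simp only [mem_Ioi] at ha hb
  rw [fareyReflect, fareyReflect, div_lt_div_iff₀ (by linarith) (by linarith)]
  linarith

theorem Rat.den_lt_three_mul_num {q : ℚ} (hq : 1 / 3 < q) : (q.den : ℤ) < 3 * q.num := by
  have := (Rat.lt_iff _ _).1 hq
  norm_num at this
  linarith

theorem Rat.den_le_two_mul_num {q : ℚ} (hq : 1 / 2 ≤ q) : (q.den : ℤ) ≤ 2 * q.num := by
  have := (Rat.le_iff _ _).1 hq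
  norm_num at this
  linarith

theorem fareyReflect_eq_div {q : ℚ} (hq : 1 / 3 < q) :
    fareyReflect q = q.num / ((3 * q.num - q.den : ℤ) : ℚ) := by
  have hden : ((3 * q.num - q.den : ℤ) : ℚ) ≠ 0 := by
    exact_mod_cast (sub_pos.2 (Rat.den_lt_three_mul_num hq)).ne'
  rw [fareyReflect, div_eq_div_iff (by linarith) hden]
  push_cast
  rw [← Rat.mul_den_eq_num]
  ring

theorem Rat.natAbs_coprime_three_mul_num_sub_den (q : ℚ) :
    q.num.natAbs.Coprime (3 * q.num - q.den).natAbs := by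
  rw [Nat.Coprime, ← Int.gcd, ← Int.isCoprime_iff_gcd_eq_one]
  have hq : IsCoprime q.num q.den := Int.isCoprime_iff_gcd_eq_one.2 q.reduced
  simpa [sub_eq_neg_add, mul_comm] using hq.neg_right.add_mul_left_right 3

theorem num_fareyReflect {q : ℚ} (hq : 1 / 3 < q) : (fareyReflect q).num = q.num := by
  rw [fareyReflect_eq_div hq]
  exact Rat.num_div_eq_of_coprime (by linarith [Rat.den_lt_three_mul_num hq])
    q.natAbs_coprime_three_mul_num_sub_den

theorem den_fareyReflect {q : ℚ} (hq : 1 / 3 < q) :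
    ((fareyReflect q).den : ℤ) = 3 * q.num - q.den := by
  rw [fareyReflect_eq_div hq]
  exact Rat.den_div_eq_of_coprime (by linarith [Rat.den_lt_three_mul_num hq])
    q.natAbs_coprime_three_mul_num_sub_den

theorem mapsTo_fareyReflect (m : ℕ) :
    MapsTo fareyReflect (FareyB (2 * m) m ∩ Ici (1 / 2)) (FareyB (2 * m) m ∩ Ici (1 / 2)) := by
  rintro q ⟨⟨-, hq1, -, hnum, hdiff⟩, hq⟩
  have hq3 : 1 / 3 < q := lt_of_lt_of_le (by norm_num) hq
  have hk := Rat.den_le_two_mul_num hq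
  have hh := Rat.num_le_denom_iff.2 hq1
  have hσ1 : fareyReflect q ≤ 1 := by
    rw [← Rat.num_le_denom_iff, num_fareyReflect hq3, den_fareyReflect hq3]
    omega
  have hσ2 : 1 / 2 ≤ fareyReflect q := by
    rw [fareyReflect, le_div_iff₀ (by linarith)]
    linarith
  refine ⟨⟨by linarith, hσ1, ?_, ?_, ?_⟩, hσ2⟩
  · zify
    rw [den_fareyReflect hq3]
    omega
  · rwa [num_fareyReflect hq3]
  · rw [den_fareyReflect hq3, num_fareyReflect hq3]
    omega

theorem stmt_13_general (m : ℕ) (N : ℕ) (f : ℕ → ℚ)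
    (henum : ∀ q : ℚ, q ∈ FareyB (2 * m) m ↔ ∃ i ≤ N, f i = q)
    (hmono : ∀ i j : ℕ, i ≤ N → j ≤ N → i < j → f i < f j)
    (s t : ℕ) (hs : s ≤ N) (hfs : f s = 1 / 2) (ht : t ≤ N) (hft : f t = 2 / 3) :
    ∀ v : ℕ, v ≤ t - s →
      (f (t + v)).num = (f (t - v)).num ∧
      ((f (t + v)).den : ℤ) + ((f (t - v)).den : ℤ) = 3 * (f (t + v)).num := by
  intro v hv
  have hf : StrictMonoOn f (Iic N) := fun i hi j hj hij => hmono i j hi hj hij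
  have hst : s ≤ t := (hf.le_iff_le hs ht).1 (by rw [hfs, hft]; norm_num)
  have himage : f '' Icc s N = FareyB (2 * m) m ∩ Ici (1 / 2) :=
    hfs ▸ image_Icc_eq_inter_Ici henum hf hs
  have hthird : f '' Icc s N ⊆ Ioi (1 / 3) := by
    rw [himage]
    exact fun q hq => (by norm_num : (1 : ℚ) / 3 < 1 / 2).trans_le hq.2
  have hpair : f (t + v) = fareyReflect (f (t - v)) :=
    (hf.mono fun i hi => hi.2).apply_add_eq_of_strictAntiOn (himage ▸ mapsTo_fareyReflect m)
      (fareyReflect_strictAntiOn.mono hthird) ⟨hst, ht⟩ (by norm_num [hft, fareyReflect]) hv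
  have hq : 1 / 3 < f (t - v) := hthird (mem_image_of_mem f ⟨by omega, by omega⟩)
  rw [hpair, num_fareyReflect hq, den_fareyReflect hq]
  exact ⟨rfl, by ring⟩

/-- Symmetry of numerators and denominators of `F(B(2m),m)` around the
fraction `2/3`: if `f₀ < f₁ < ⋯ < f_N` enumerates `F(B(2m),m)` in ascending
order, `f_s = 1/2` and `f_t = 2/3`, then for `0 ≤ v ≤ t - s` the fractions
`f_{t+v}` and `f_{t-v}` have equal numerators, and the sum of their
denominators equals three times this common numerator. -/
theorem stmt_13 (m : ℕ) (hm : 1 < m) (N : ℕ) (f : ℕ → ℚ)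
    (henum : ∀ q : ℚ, q ∈ FareyB (2 * m) m ↔ ∃ i ≤ N, f i = q)
    (hmono : ∀ i j : ℕ, i ≤ N → j ≤ N → i < j → f i < f j)
    (hf0 : f 0 = 0)
    (s t : ℕ) (hs : s ≤ N) (hfs : f s = 1 / 2) (ht : t ≤ N) (hft : f t = 2 / 3) :
    ∀ v : ℕ, v ≤ t - s →
      (f (t + v)).num = (f (t - v)).num ∧
      ((f (t + v)).den : ℤ) + ((f (t - v)).den : ℤ) = 3 * (f (t + v)).num :=
  stmt_13_general m N f henum hmono s t hs hfs ht hft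
end

section
/- Let m > 1 be an integer, and index the elements of F(B(2m),m) in ascending order as f₀ < f₁ < f₂ < ⋯ with f₀ = 0/1. Let s and t be the indices with f_s = 1/3 and f_t = 1/2. Then for every integer v with 0 ≤ v ≤ t−s, one has den(f_{s+v}) + den(f_{s−v}) = 3·(num(f_{s+v}) + num(f_{s−v})), where num and den denote numerator and denominator in lowest terms. -/
open Set

theorem eq_self_of_strictMonoOn_Iic {φ : ℕ → ℕ} {n : ℕ} (hφ : StrictMonoOn φ (Iic n))
    (hmaps : MapsTo φ (Iic n) (Iic n)) {i : ℕ} (hi : i ≤ n) : φ i = i := by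
  have hmono : StrictMono (hmaps.restrict φ _ _) := fun a b hab => hφ a.2 b.2 hab
  simpa using congrArg Subtype.val (congrFun hmono.eq_id ⟨i, hi⟩)

theorem apply_eq_apply_sub_of_strictAntiOn {α : Type*} [LinearOrder α] {f : ℕ → α} {g : α → α}
    {n : ℕ} (hf : StrictMonoOn f (Iic n)) (hg : StrictAntiOn g (f '' Iic n))
    (hmaps : MapsTo g (f '' Iic n) (f '' Iic n)) {i : ℕ} (hi : i ≤ n) :
    g (f i) = f (n - i) := by
  set φ : ℕ → ℕ := fun j => Function.invFunOn f (Iic n) (g (f j))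
  have hφ_mem : ∀ j ∈ Iic n, φ j ∈ Iic n := fun j hj =>
    Function.invFunOn_mem (hmaps (mem_image_of_mem f hj))
  have hfφ : ∀ j ∈ Iic n, f (φ j) = g (f j) := fun j hj =>
    Function.invFunOn_eq (hmaps (mem_image_of_mem f hj))
  have hid : n - φ i = i := by
    refine eq_self_of_strictMonoOn_Iic (φ := fun j => n - φ j) ?_ (fun j _ => Nat.sub_le _ _) hi
    intro j hj k hk hjk
    have hφ_lt : φ k < φ j := by
      rw [← hf.lt_iff_lt (hφ_mem k hk) (hφ_mem j hj), hfφ j hj, hfφ k hk]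
      exact hg (mem_image_of_mem f hj) (mem_image_of_mem f hk) (hf hj hk hjk)
    exact Nat.sub_lt_sub_left (hφ_lt.trans_le (hφ_mem j hj)) hφ_lt
  have hφ_le : φ i ≤ n := hφ_mem i hi
  rw [← hfφ i hi]
  congr 1
  omega

noncomputable def thirdReflection (q : ℚ) : ℚ := (1 - 2 * q) / (2 - 3 * q)

theorem thirdReflection_one_third : thirdReflection (1 / 3) = 1 / 3 := by
  norm_num [thirdReflection]

theorem strictAntiOn_thirdReflection : StrictAntiOn thirdReflection (Iio (2 / 3)) := by
  intro p hp q hq hpq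
  simp only [mem_Iio] at hp hq
  rw [thirdReflection, thirdReflection, div_lt_div_iff₀ (by linarith) (by linarith)]
  linarith

theorem thirdReflection_eq_div (q : ℚ) :
    thirdReflection q = ((q.den - 2 * q.num : ℤ) : ℚ) / ((2 * q.den - 3 * q.num : ℤ) : ℚ) := by
  have hden : (q.den : ℚ) ≠ 0 := by exact_mod_cast q.den_ne_zero
  conv_lhs => rw [thirdReflection, ← q.num_div_den]
  push_cast
  rw [← div_div_div_cancel_right₀ hden (q.den - 2 * q.num : ℚ)]
  congr 1 <;> field_simp

theorem isCoprime_den_sub_two_mul_num (q : ℚ) :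
    IsCoprime ((q.den : ℤ) - 2 * q.num) (2 * q.den - 3 * q.num) := by
  obtain ⟨u, v, huv⟩ := Rat.isCoprime_num_den q
  exact ⟨-2 * u - 3 * v, u + 2 * v, by linear_combination huv⟩

theorem two_mul_den_sub_three_mul_num_pos {q : ℚ} (hq : q < 2 / 3) :
    0 < 2 * (q.den : ℤ) - 3 * q.num := by
  have hden : (0 : ℚ) < q.den := by exact_mod_cast q.den_pos
  have : (3 * q.num : ℚ) < 2 * q.den := by
    rw [← Rat.mul_den_eq_num]
    nlinarith
  have : 3 * q.num < 2 * (q.den : ℤ) := by exact_mod_cast this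
  linarith

theorem thirdReflection_num {q : ℚ} (hq : q < 2 / 3) :
    (thirdReflection q).num = q.den - 2 * q.num := by
  rw [thirdReflection_eq_div]
  exact Rat.num_div_eq_of_coprime (two_mul_den_sub_three_mul_num_pos hq)
    (Int.isCoprime_iff_gcd_eq_one.mp (isCoprime_den_sub_two_mul_num q))

theorem thirdReflection_den {q : ℚ} (hq : q < 2 / 3) :
    ((thirdReflection q).den : ℤ) = 2 * q.den - 3 * q.num := by
  rw [thirdReflection_eq_div]
  exact Rat.den_div_eq_of_coprime (two_mul_den_sub_three_mul_num_pos hq)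
    (Int.isCoprime_iff_gcd_eq_one.mp (isCoprime_den_sub_two_mul_num q))

theorem den_add_den_thirdReflection {q : ℚ} (hq : q < 2 / 3) :
    (q.den : ℤ) + (thirdReflection q).den = 3 * (q.num + (thirdReflection q).num) := by
  rw [thirdReflection_num hq, thirdReflection_den hq]
  ring

theorem mapsTo_thirdReflection_fareyB {n m : ℕ} (hnm : n ≤ 2 * m) :
    MapsTo thirdReflection (FareyB n m ∩ Iic (1 / 2)) (FareyB n m ∩ Iic (1 / 2)) := by
  rintro q ⟨⟨hq0, -, -, -, hdn⟩, hq⟩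
  rw [mem_Iic] at hq
  have hq' : q < 2 / 3 := by linarith
  have hpos : (0 : ℚ) < 2 - 3 * q := by linarith
  have hnum0 : 0 ≤ q.num := Rat.num_nonneg.mpr hq0
  have hle : thirdReflection q ≤ 1 / 2 := by
    rw [thirdReflection, div_le_iff₀ hpos]
    linarith
  have hden : ((thirdReflection q).den : ℤ) ≤ n := by
    rw [thirdReflection_den hq']
    omega
  refine ⟨⟨div_nonneg (by linarith) hpos.le, by linarith, by exact_mod_cast hden, ?_, ?_⟩, hle⟩
  · rw [thirdReflection_num hq']
    omega
  · rw [thirdReflection_num hq', thirdReflection_den hq']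
    omega

theorem stmt_15_general (m : ℕ) (N : ℕ) (f : ℕ → ℚ)
    (henum : ∀ q : ℚ, q ∈ FareyB (2 * m) m ↔ ∃ i ≤ N, f i = q)
    (hmono : ∀ i j : ℕ, i ≤ N → j ≤ N → i < j → f i < f j)
    (s t : ℕ) (hs : s ≤ N) (hfs : f s = 1 / 3) (ht : t ≤ N) (hft : f t = 1 / 2) :
    ∀ v : ℕ, v ≤ t - s →
      ((f (s + v)).den : ℤ) + ((f (s - v)).den : ℤ) =
        3 * ((f (s + v)).num + (f (s - v)).num) := by
  have hf : StrictMonoOn f (Iic N) := fun i hi j hj => hmono i j hi hj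
  have hst : s ≤ t := (hf.le_iff_le hs ht).mp (by rw [hfs, hft]; norm_num)
  have himage : f '' Iic t = FareyB (2 * m) m ∩ Iic (1 / 2) := by
    ext q
    constructor
    · rintro ⟨i, hi, rfl⟩
      exact ⟨(henum _).mpr ⟨i, hi.trans ht, rfl⟩,
        hft ▸ hf.monotoneOn (mem_Iic.mpr (hi.trans ht)) ht hi⟩
    · rintro ⟨hq, hq2⟩
      obtain ⟨j, hj, rfl⟩ := (henum q).mp hq
      exact ⟨j, (hf.le_iff_le hj ht).mp (hft ▸ hq2), rfl⟩
  have hrev : ∀ i ≤ t, thirdReflection (f i) = f (t - i) := fun i hi =>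
    apply_eq_apply_sub_of_strictAntiOn (hf.mono (Iic_subset_Iic.mpr ht))
      (himage ▸ strictAntiOn_thirdReflection.mono fun q hq => by
        simp only [mem_inter_iff, mem_Iic, mem_Iio] at hq ⊢; linarith)
      (himage ▸ mapsTo_thirdReflection_fareyB le_rfl) hi
  have hts : t - s = s :=
    hf.injOn (mem_Iic.mpr (by omega)) hs (by rw [← hrev s hst, hfs, thirdReflection_one_third])
  intro v hv
  have hreflect : f (s - v) = thirdReflection (f (s + v)) := by
    rw [hrev _ (by omega)]
    congr 1
    omega
  have hhalf : f (s + v) ≤ 1 / 2 := (himage ▸ mem_image_of_mem f (mem_Iic.mpr (by omega))).2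
  rw [hreflect]
  exact den_add_den_thirdReflection (by linarith)

/-- Symmetry of `F(B(2m),m)` around the fraction `1/3`: if `f₀ < f₁ < ⋯ < f_N`
enumerates `F(B(2m),m)` in ascending order, `f_s = 1/3` and `f_t = 1/2`, then
for `0 ≤ v ≤ t - s` the sum of the denominators of `f_{s+v}` and `f_{s-v}`
equals three times the sum of their numerators. -/
theorem stmt_15 (m : ℕ) (hm : 1 < m) (N : ℕ) (f : ℕ → ℚ)
    (henum : ∀ q : ℚ, q ∈ FareyB (2 * m) m ↔ ∃ i ≤ N, f i = q)
    (hmono : ∀ i j : ℕ, i ≤ N → j ≤ N → i < j → f i < f j)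
    (hf0 : f 0 = 0)
    (s t : ℕ) (hs : s ≤ N) (hfs : f s = 1 / 3) (ht : t ≤ N) (hft : f t = 1 / 2) :
    ∀ v : ℕ, v ≤ t - s →
      ((f (s + v)).den : ℤ) + ((f (s - v)).den : ℤ) =
        3 * ((f (s + v)).num + (f (s - v)).num) :=
  stmt_15_general m N f henum hmono s t hs hfs ht hft
end

section
/- Let m > 1 be an integer. In F(B(2m),m), the predecessor of 1/3 is the fraction h/k where h = (m−2)/2 and k = (3m−4)/2 if m is even, and h = (m−1)/2 and k = (3m−1)/2 if m is odd; and the successor of 1/3 is the fraction h/k where h = m/2 and k = (3m−2)/2 if m is even, and h = (m+1)/2 and k = (3m+1)/2 if m is odd. -/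
lemma numden {a b : ℤ} (hb : 0 < b) (h : IsCoprime a b) :
    ((a:ℚ)/b).num = a ∧ (((a:ℚ)/b).den : ℤ) = b := by
  have h' : Nat.Coprime a.natAbs b.natAbs := Int.isCoprime_iff_gcd_eq_one.mp h
  exact ⟨Rat.num_div_eq_of_coprime hb h', Rat.den_div_eq_of_coprime hb h'⟩

lemma third_numden : ((1:ℚ)/3).num = 1 ∧ (((1:ℚ)/3).den : ℤ) = 3 := by
  have h : (1/3 : ℚ) = ((1:ℤ):ℚ)/((3:ℤ):ℚ) := by norm_num
  rw [h]
  exact numden (by norm_num) ⟨1, 0, by ring⟩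

lemma cross_lt_left {a b : ℤ} (hb : 0 < b) {g : ℚ} (h : (a:ℚ)/b < g) :
    a * g.den < g.num * b := by
  rw [← Rat.num_div_den g, div_lt_div_iff₀ (by exact_mod_cast hb)
    (by exact_mod_cast g.pos)] at h
  exact_mod_cast h

lemma cross_lt_right {a b : ℤ} (hb : 0 < b) {g : ℚ} (h : g < (a:ℚ)/b) :
    g.num * b < a * g.den := by
  rw [← Rat.num_div_den g, div_lt_div_iff₀ (by exact_mod_cast g.pos)
    (by exact_mod_cast hb)] at h
  exact_mod_cast h

lemma mem_FareyB {m : ℕ} {a b : ℤ} (ha : 0 ≤ a) (hb : 0 < b) (hab : a ≤ b)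
    (hcop : IsCoprime a b) (h1 : b ≤ 2*(m:ℤ)) (h2 : a ≤ (m:ℤ))
    (h3 : b - a ≤ (m:ℤ)) : ((a:ℚ)/(b:ℚ)) ∈ FareyB (2*m) m := by
  obtain ⟨hn, hd⟩ := numden hb hcop
  have hb' : (0:ℚ) < (b:ℚ) := by exact_mod_cast hb
  refine ⟨by positivity, ?_, ?_, ?_, ?_⟩
  · rw [div_le_one hb']; exact_mod_cast hab
  · have : ((((a:ℚ)/b).den : ℤ)) ≤ 2*m := by rw [hd]; exact h1
    exact_mod_cast this
  · rw [hn]; exact h2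
  · rw [hn, hd]; push_cast; omega

lemma third_mem {m : ℕ} (hm : 1 < m) : ((1:ℚ)/3) ∈ FareyB (2*m) m := by
  obtain ⟨hn, hd⟩ := third_numden
  refine ⟨by norm_num, by norm_num, ?_, ?_, ?_⟩
  · have : (((1:ℚ)/3).den : ℤ) ≤ 2*m := by rw [hd]; omega
    exact_mod_cast this
  · rw [hn]; omega
  · rw [hn, hd]; push_cast; omega

lemma pred_third {m : ℕ} (hm : 1 < m) {a b : ℤ} (ha : 0 ≤ a) (hb : 0 < b)
    (hdet : b - 3*a = 1) (hb' : b ≤ 2*(m:ℤ)) (ha' : a ≤ (m:ℤ))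
    (hba : b - a ≤ (m:ℤ)) (hgap : (m:ℤ) < 2 + (b - a)) :
    IsPredIn (FareyB (2*m) m) ((a:ℚ)/b) (1/3) := by
  have hb3 : b = 3*a + 1 := by omega
  subst hb3
  refine ⟨mem_FareyB ha hb (by omega) ⟨-3, 1, by ring⟩ hb' ha' hba,
    third_mem hm, ?_, ?_⟩
  · rw [div_lt_div_iff₀ (by exact_mod_cast hb) (by norm_num)]
    push_cast; linarith
  · rintro g hg ⟨hg1, hg2⟩
    obtain ⟨-, -, -, -, hS⟩ := hg
    have h1 : a * g.den < g.num * (3*a+1) := cross_lt_left hb hg1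
    have h2 : g.num * 3 < 1 * g.den := by
      have hr : (1/3 : ℚ) = ((1:ℤ):ℚ)/((3:ℤ):ℚ) := by norm_num
      exact cross_lt_right (by norm_num) (hr ▸ hg2)
    set p := g.num
    set q := (g.den : ℤ)
    have hB : 1 ≤ q - 3*p := by omega
    have hint : (2*a+1) * 1 ≤ (2*a+1) * (q - 3*p) :=
      mul_le_mul_of_nonneg_left hB (by omega)
    have key : q - p = 2*(p*(3*a+1) - q*a) + (2*a+1)*(q - 3*p) := by ring
    have hS' : q - p ≤ (m:ℤ) := by push_cast at hS ⊢; omega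
    nlinarith [h1, hint, key, hS', hgap]

lemma succ_third {m : ℕ} (hm : 1 < m) {a b : ℤ} (ha : 1 ≤ a) (hb : 0 < b)
    (hdet : 3*a - b = 1) (hb' : b ≤ 2*(m:ℤ)) (ha' : a ≤ (m:ℤ))
    (hba : b - a ≤ (m:ℤ)) (hgap : (m:ℤ) < 2 + (b - a)) :
    IsSuccIn (FareyB (2*m) m) (1/3) ((a:ℚ)/b) := by
  have hb3 : b = 3*a - 1 := by omega
  subst hb3
  refine ⟨third_mem hm,
    mem_FareyB (by omega) hb (by omega) ⟨3, -1, by ring⟩ hb' ha' hba, ?_, ?_⟩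
  · rw [div_lt_div_iff₀ (by norm_num) (by exact_mod_cast hb)]
    have haq : (1:ℚ) ≤ (a:ℚ) := by exact_mod_cast ha
    push_cast; linarith
  · rintro g hg ⟨hg1, hg2⟩
    obtain ⟨-, -, -, -, hS⟩ := hg
    have h2 : g.num * (3*a-1) < a * g.den := cross_lt_right hb hg2
    have h1 : 1 * g.den < g.num * 3 := by
      have hr : (1/3 : ℚ) = ((1:ℤ):ℚ)/((3:ℤ):ℚ) := by norm_num
      exact cross_lt_left (by norm_num) (hr ▸ hg1)
    set p := g.num
    set q := (g.den : ℤ)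
    have hA : 1 ≤ 3*p - q := by omega
    have hint : (2*a-1) * 1 ≤ (2*a-1) * (3*p - q) :=
      mul_le_mul_of_nonneg_left hA (by omega)
    have key : q - p = (2*a-1)*(3*p - q) + 2*(q*a - p*(3*a-1)) := by ring
    have hS' : q - p ≤ (m:ℤ) := by push_cast at hS ⊢; omega
    nlinarith [h2, hint, key, hS', hgap]

/-- The neighbors of `1/3` in `F(B(2m),m)`: the predecessor of `1/3` is
`(m-2)/2 / ((3m-4)/2)` for even `m` and `(m-1)/2 / ((3m-1)/2)` for odd `m`,
and the successor of `1/3` is `m/2 / ((3m-2)/2)` for even `m` and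
`(m+1)/2 / ((3m+1)/2)` for odd `m`. -/
theorem stmt_16 (m : ℕ) (hm : 1 < m) :
    IsPredIn (FareyB (2 * m) m)
      (if Even m then (((m : ℚ) - 2) / 2) / ((3 * (m : ℚ) - 4) / 2)
       else (((m : ℚ) - 1) / 2) / ((3 * (m : ℚ) - 1) / 2))
      (1 / 3) ∧
    IsSuccIn (FareyB (2 * m) m) (1 / 3)
      (if Even m then ((m : ℚ) / 2) / ((3 * (m : ℚ) - 2) / 2)
       else (((m : ℚ) + 1) / 2) / ((3 * (m : ℚ) + 1) / 2)) := by
  rcases Nat.even_or_odd m with he | ho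
  · rw [if_pos he, if_pos he]
    obtain ⟨k, hk⟩ := he
    have hk1 : 1 ≤ k := by omega
    have hkz : (m:ℤ) = (k:ℤ) + k := by exact_mod_cast hk
    have hmq : (m:ℚ) = 2*(k:ℚ) := by rw [hk]; push_cast; ring
    have hkq : (1:ℚ) ≤ (k:ℚ) := by exact_mod_cast hk1
    have epred : ((m:ℚ) - 2)/2/((3*(m:ℚ)-4)/2)
        = ((((k:ℤ)-1) : ℤ):ℚ)/((((3*(k:ℤ)-2)) : ℤ):ℚ) := by
      rw [hmq, div_div_div_cancel_right₀ (by norm_num : (2:ℚ) ≠ 0),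
        div_eq_div_iff (by nlinarith) (by push_cast; nlinarith)]
      push_cast; ring
    have esucc : (m:ℚ)/2/((3*(m:ℚ)-2)/2)
        = (((k:ℤ)) :ℚ)/((((3*(k:ℤ)-1)) : ℤ):ℚ) := by
      rw [hmq, div_div_div_cancel_right₀ (by norm_num : (2:ℚ) ≠ 0),
        div_eq_div_iff (by nlinarith) (by push_cast; nlinarith)]
      push_cast; ring
    rw [epred, esucc]
    refine ⟨pred_third (a := (k:ℤ)-1) (b := 3*(k:ℤ)-2) hm ?_ ?_ ?_ ?_ ?_ ?_ ?_,
      succ_third (a := (k:ℤ)) (b := 3*(k:ℤ)-1) hm ?_ ?_ ?_ ?_ ?_ ?_ ?_⟩ <;> omega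
  · have hne : ¬ Even m := Nat.not_even_iff_odd.mpr ho
    rw [if_neg hne, if_neg hne]
    obtain ⟨k, hk⟩ := ho
    have hk1 : 1 ≤ k := by omega
    have hkz : (m:ℤ) = 2*(k:ℤ) + 1 := by exact_mod_cast hk
    have hmq : (m:ℚ) = 2*(k:ℚ) + 1 := by rw [hk]; push_cast; ring
    have hkq : (1:ℚ) ≤ (k:ℚ) := by exact_mod_cast hk1
    have epred : ((m:ℚ) - 1)/2/((3*(m:ℚ)-1)/2)
        = (((k:ℤ)):ℚ)/((((3*(k:ℤ)+1)) : ℤ):ℚ) := by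
      rw [hmq, div_div_div_cancel_right₀ (by norm_num : (2:ℚ) ≠ 0),
        div_eq_div_iff (by nlinarith) (by push_cast; nlinarith)]
      push_cast; ring
    have esucc : ((m:ℚ) + 1)/2/((3*(m:ℚ)+1)/2)
        = ((((k:ℤ)+1 : ℤ)) :ℚ)/((((3*(k:ℤ)+2)) : ℤ):ℚ) := by
      rw [hmq, div_div_div_cancel_right₀ (by norm_num : (2:ℚ) ≠ 0),
        div_eq_div_iff (by nlinarith) (by push_cast; nlinarith)]
      push_cast; ring
    rw [epred, esucc]
    refine ⟨pred_third (a := (k:ℤ)) (b := 3*(k:ℤ)+1) hm ?_ ?_ ?_ ?_ ?_ ?_ ?_,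
      succ_third (a := (k:ℤ)+1) (b := 3*(k:ℤ)+2) hm ?_ ?_ ?_ ?_ ?_ ?_ ?_⟩ <;> omega
end

section
/- Let m ≥ 1 be an integer and let h/k be a fraction in lowest terms belonging to F(B(2m),m) with 0/1 < h/k ≤ 1/2. Let x₀ be the integer satisfying h·x₀ ≡ 1 (mod (k−h)) and m−k+h+1 ≤ x₀ ≤ m. Then the fraction ((h·x₀−1)/(k−h)) / ((k·x₀−1)/(k−h)) is the predecessor of h/k in F(B(2m),m). In particular, the fraction (m−1)/(2m−1) is the predecessor of 1/2 in F(B(2m),m). -/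
set_option maxHeartbeats 1000000 in
lemma aux_general (m : ℕ) (hm : 1 ≤ m) :
    ∀ h k : ℤ, 0 < k → Int.gcd h k = 1 →
      (h : ℚ) / (k : ℚ) ∈ FareyB (2 * m) m →
      0 < (h : ℚ) / (k : ℚ) → (h : ℚ) / (k : ℚ) ≤ 1 / 2 →
      ∀ x₀ : ℤ, h * x₀ ≡ 1 [ZMOD (k - h)] →
        (m : ℤ) - k + h + 1 ≤ x₀ → x₀ ≤ (m : ℤ) →
        IsPredIn (FareyB (2 * m) m)
          ((((h * x₀ - 1 : ℤ) : ℚ) / ((k - h : ℤ) : ℚ)) /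
            (((k * x₀ - 1 : ℤ) : ℚ) / ((k - h : ℤ) : ℚ)))
          ((h : ℚ) / (k : ℚ)) := by
  intro h k hk hcop hmem hpos hhalf x₀ hx₀ hx₀l hx₀u
  have hkQ : (0:ℚ) < (k:ℚ) := by exact_mod_cast hk
  -- h > 0
  have hh : 0 < h := by
    by_contra hcon
    push_neg at hcon
    have : (h:ℚ) ≤ 0 := by exact_mod_cast hcon
    have := div_nonpos_of_nonpos_of_nonneg this hkQ.le
    linarith
  -- 2h ≤ k
  have h2h : 2 * h ≤ k := by
    rw [div_le_div_iff₀ hkQ (by norm_num : (0:ℚ) < 2)] at hhalf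
    have h2 : ((2 * h : ℤ) : ℚ) ≤ ((k:ℤ):ℚ) := by push_cast; linarith
    exact_mod_cast h2
  have hd : 0 < k - h := by omega
  -- num and den of h/k
  have hnum : ((h:ℚ)/(k:ℚ)).num = h :=
    Rat.num_div_eq_of_coprime hk (by rwa [Int.gcd] at hcop)
  have hden : (((h:ℚ)/(k:ℚ)).den : ℤ) = k :=
    Rat.den_div_eq_of_coprime hk (by rwa [Int.gcd] at hcop)
  have hmem' := hmem
  obtain ⟨-, -, -, hnumle, hdenle⟩ := hmem'
  rw [hnum] at hnumle
  rw [hnum, hden] at hdenle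
  have hkm : k - h ≤ (m:ℤ) := by push_cast at hdenle; omega
  have hx₀1 : 1 ≤ x₀ := by omega
  -- divisibility and a, b
  obtain ⟨a, ha⟩ : (k - h) ∣ (h * x₀ - 1) := by
    obtain ⟨c, hc⟩ := hx₀.dvd
    exact ⟨-c, by linarith⟩
  obtain ⟨b, hb_def⟩ : ∃ b : ℤ, b = a + x₀ := ⟨_, rfl⟩
  have hb : k * x₀ - 1 = (k - h) * b := by rw [hb_def]; linarith [ha]
  -- unimodularity
  have huni : h * b - k * a = 1 := by
    have : (k - h) * (h * b - k * a) = (k - h) * 1 := by ring_nf; nlinarith [ha, hb]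
    exact mul_left_cancel₀ (by omega) this
  -- bounds on a, b
  have ham : a ≤ (m:ℤ) - 1 := by nlinarith [ha]
  have ha0 : 0 ≤ a := by nlinarith [ha]
  have hb_pos : 0 < b := by omega
  have hbQ : (0:ℚ) < (b:ℚ) := by exact_mod_cast hb_pos
  have hab_cop : Int.gcd a b = 1 := by
    have : IsCoprime a b := ⟨-k, h, by linarith⟩
    exact Int.isCoprime_iff_gcd_eq_one.mp this
  -- the fraction simplifies to a/b
  have hdQ : ((k - h : ℤ) : ℚ) ≠ 0 := by
    exact_mod_cast (by omega : (k - h : ℤ) ≠ 0)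
  have hfrac : (((h * x₀ - 1 : ℤ) : ℚ) / ((k - h : ℤ) : ℚ)) /
      (((k * x₀ - 1 : ℤ) : ℚ) / ((k - h : ℤ) : ℚ)) = (a:ℚ) / (b:ℚ) := by
    have hdQ' : ((k:ℚ) - (h:ℚ)) ≠ 0 := by
      have h0 : ((k - h : ℤ):ℚ) ≠ 0 := hdQ
      push_cast at h0; exact h0
    rw [ha, hb]
    push_cast
    rw [mul_div_cancel_left₀ _ hdQ', mul_div_cancel_left₀ _ hdQ']
  rw [hfrac]
  have hanum : ((a:ℚ)/(b:ℚ)).num = a :=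
    Rat.num_div_eq_of_coprime hb_pos (by rwa [Int.gcd] at hab_cop)
  have haden : (((a:ℚ)/(b:ℚ)).den : ℤ) = b :=
    Rat.den_div_eq_of_coprime hb_pos (by rwa [Int.gcd] at hab_cop)
  have hlt : (a:ℚ)/(b:ℚ) < (h:ℚ)/(k:ℚ) := by
    rw [div_lt_div_iff₀ hbQ hkQ]
    exact_mod_cast (by nlinarith : (a:ℤ) * k < h * b)
  refine ⟨?_, hmem, hlt, ?_⟩
  · refine ⟨?_, ?_, ?_, ?_, ?_⟩
    · positivity
    · rw [div_le_one hbQ]; exact_mod_cast (by omega : a ≤ b)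
    · have : (((a:ℚ)/(b:ℚ)).den : ℤ) ≤ (2 * m : ℕ) := by
        rw [haden]; push_cast; omega
      exact_mod_cast this
    · rw [hanum]; omega
    · rw [hanum, haden]; push_cast; omega
  · rintro g ⟨hg0, hg1, hgden, hgnum, hgdiff⟩ ⟨hga, hgk⟩
    obtain ⟨p, q, hq_pos, hgeq, hgd⟩ :
        ∃ p q : ℤ, 0 < q ∧ g = (p:ℚ)/(q:ℚ) ∧ q - p ≤ (m:ℤ) := by
      refine ⟨g.num, (g.den : ℤ), by exact_mod_cast g.pos, ?_, ?_⟩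
      · push_cast; exact (Rat.num_div_den g).symm
      · push_cast at hgdiff ⊢; omega
    have hqQ : (0:ℚ) < (q:ℚ) := by exact_mod_cast hq_pos
    rw [hgeq] at hga hgk
    have h1 : a * q < p * b := by
      rw [div_lt_div_iff₀ hbQ hqQ] at hga
      exact_mod_cast hga
    have h2 : p * k < h * q := by
      rw [div_lt_div_iff₀ hqQ hkQ] at hgk
      exact_mod_cast hgk
    -- key identity: q - p = (b-a)(h q - k p) + (k-h)(p b - a q)
    have key : q - p = (b - a) * (h * q - k * p) + (k - h) * (p * b - a * q) := by
      linear_combination (p - q) * huni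
    have t1 : (b - a) * 1 ≤ (b - a) * (h * q - k * p) :=
      mul_le_mul_of_nonneg_left (by linarith) (by omega)
    have t2 : (k - h) * 1 ≤ (k - h) * (p * b - a * q) :=
      mul_le_mul_of_nonneg_left (by linarith) (by omega)
    linarith [key, t1, t2]

/-- Predecessor formula in `F(B(2m),m)` for fractions `0 < h/k ≤ 1/2`; in
particular, `(m-1)/(2m-1)` is the predecessor of `1/2`. -/
theorem stmt_17 (m : ℕ) (hm : 1 ≤ m) :
    (∀ h k : ℤ, 0 < k → Int.gcd h k = 1 →
      (h : ℚ) / (k : ℚ) ∈ FareyB (2 * m) m →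
      0 < (h : ℚ) / (k : ℚ) → (h : ℚ) / (k : ℚ) ≤ 1 / 2 →
      ∀ x₀ : ℤ, h * x₀ ≡ 1 [ZMOD (k - h)] →
        (m : ℤ) - k + h + 1 ≤ x₀ → x₀ ≤ (m : ℤ) →
        IsPredIn (FareyB (2 * m) m)
          ((((h * x₀ - 1 : ℤ) : ℚ) / ((k - h : ℤ) : ℚ)) /
            (((k * x₀ - 1 : ℤ) : ℚ) / ((k - h : ℤ) : ℚ)))
          ((h : ℚ) / (k : ℚ))) ∧
    IsPredIn (FareyB (2 * m) m) (((m : ℚ) - 1) / (2 * (m : ℚ) - 1)) (1 / 2) := by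
  refine ⟨aux_general m hm, ?_⟩
  have hmQ : (1:ℚ) ≤ (m:ℚ) := by exact_mod_cast hm
  have h12 : ((1:ℤ):ℚ)/((2:ℤ):ℚ) = 1/2 := by norm_num
  have hmemhalf : (1:ℚ)/2 ∈ FareyB (2*m) m := by
    refine ⟨by norm_num, by norm_num, ?_, ?_, ?_⟩
    · show (1/2 : ℚ).den ≤ 2*m; norm_num; omega
    · show (1/2 : ℚ).num ≤ (m:ℤ); norm_num; exact_mod_cast hm
    · show ((1/2:ℚ).den : ℤ) - (1/2:ℚ).num ≤ (2*m:ℕ) - (m:ℕ)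
      norm_num
      push_cast; omega
  have := aux_general m hm 1 2 (by norm_num) (by norm_num)
    (by rw [h12]; exact hmemhalf) (by rw [h12]; norm_num) (by rw [h12])
    (m:ℤ) (by simp [Int.ModEq]) (by omega) le_rfl
  rw [h12] at this
  convert this using 2 <;> push_cast <;> ring
end

section
/- Let m ≥ 1 be an integer and let h/k be a fraction in lowest terms belonging to F(B(2m),m) with 0/1 ≤ h/k < 1/2. Let x₀ be the integer satisfying h·x₀ ≡ −1 (mod (k−h)) and m−k+h+1 ≤ x₀ ≤ m. Then the fraction ((h·x₀+1)/(k−h)) / ((k·x₀+1)/(k−h)) is the successor of h/k in F(B(2m),m). -/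
set_option maxHeartbeats 1600000 in
/-- Successor formula in `F(B(2m),m)` for fractions `0 ≤ h/k < 1/2`. -/
theorem stmt_18 (m : ℕ) (hm : 1 ≤ m)
    (h k : ℤ) (hk : 0 < k) (hcop : Int.gcd h k = 1)
    (hmem : (h : ℚ) / (k : ℚ) ∈ FareyB (2 * m) m)
    (h0 : 0 ≤ (h : ℚ) / (k : ℚ)) (hlt : (h : ℚ) / (k : ℚ) < 1 / 2)
    (x₀ : ℤ) (hx₁ : h * x₀ ≡ -1 [ZMOD (k - h)])
    (hx₂ : (m : ℤ) - k + h + 1 ≤ x₀) (hx₃ : x₀ ≤ (m : ℤ)) :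
    IsSuccIn (FareyB (2 * m) m) ((h : ℚ) / (k : ℚ))
      ((((h * x₀ + 1 : ℤ) : ℚ) / ((k - h : ℤ) : ℚ)) /
        (((k * x₀ + 1 : ℤ) : ℚ) / ((k - h : ℤ) : ℚ))) := by
  -- basic facts
  have hh0 : 0 ≤ h := by
    by_contra hc
    push_neg at hc
    have : (h : ℚ) / k < 0 :=
      div_neg_of_neg_of_pos (by exact_mod_cast hc) (by exact_mod_cast hk)
    linarith
  have h2h : 2 * h < k := by
    have h1 := (div_lt_div_iff₀ (by exact_mod_cast hk : (0:ℚ) < (k:ℚ)) (by norm_num : (0:ℚ) < 2)).mp hlt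
    have : ((2 * h : ℤ) : ℚ) < ((k : ℤ) : ℚ) := by push_cast; linarith
    exact_mod_cast this
  have hd : 0 < k - h := by omega
  -- num/den of h/k
  have hcop' : Nat.Coprime h.natAbs k.natAbs := hcop
  have hnum : ((h : ℚ) / k).num = h := Rat.num_div_eq_of_coprime hk hcop'
  have hden : (((h : ℚ) / k).den : ℤ) = k := Rat.den_div_eq_of_coprime hk hcop'
  have hmem2 := hmem
  obtain ⟨_, _, hden2m, hnumm, hdm⟩ := hmem2
  rw [hnum] at hnumm
  rw [hden, hnum] at hdm
  have hkm : k - h ≤ (m : ℤ) := by push_cast at hdm; linarith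
  have hx0pos : 1 ≤ x₀ := by omega
  -- divisibility
  have hdvd : (k - h) ∣ (h * x₀ + 1) := by
    have := Int.ModEq.dvd hx₁
    have h2 : h * x₀ + 1 = -(-1 - h * x₀) := by ring
    rw [h2]
    exact dvd_neg.mpr this
  obtain ⟨a, ha⟩ := hdvd
  obtain ⟨b, hb⟩ : ∃ b, b = a + x₀ := ⟨_, rfl⟩
  have hbk : k * x₀ + 1 = (k - h) * b := by rw [hb]; ring_nf; linarith [ha]
  have hab : a * k - b * h = 1 := by
    have hne : (k - h) ≠ 0 := by omega
    have : (k - h) * (a * k - b * h) = (k - h) * 1 := by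
      have e1 : (k - h) * (a * k - b * h) = ((k-h)*a) * k - ((k-h)*b) * h := by ring
      rw [e1, ← ha, ← hbk]; ring
    exact mul_left_cancel₀ hne this
  have hapos : 1 ≤ a := by nlinarith
  have ham : a ≤ (m : ℤ) := by nlinarith
  have hbpos : 1 ≤ b := by omega
  have hbm : b ≤ 2 * (m : ℤ) := by omega
  -- the expression equals a / b
  have hdq : ((k - h : ℤ) : ℚ) ≠ 0 := by exact_mod_cast (by omega : (k - h : ℤ) ≠ 0)
  have hexpr : (((h * x₀ + 1 : ℤ) : ℚ) / ((k - h : ℤ) : ℚ)) /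
        (((k * x₀ + 1 : ℤ) : ℚ) / ((k - h : ℤ) : ℚ)) = (a : ℚ) / (b : ℚ) := by
    have hdq' : ((k:ℚ) - h) ≠ 0 := by push_cast at hdq; exact hdq
    have hbq : (b:ℚ) ≠ 0 := by exact_mod_cast (by omega : b ≠ 0)
    rw [ha, hbk]
    push_cast
    field_simp
  rw [hexpr]
  -- facts about a / b
  have habcop : Int.gcd a b = 1 := Int.isCoprime_iff_gcd_eq_one.mp ⟨k, -h, by linarith [hab]⟩
  have hbZ : (0:ℤ) < b := hbpos
  have hanum : ((a : ℚ) / b).num = a := Rat.num_div_eq_of_coprime hbZ habcop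
  have haden : (((a : ℚ) / b).den : ℤ) = b := Rat.den_div_eq_of_coprime hbZ habcop
  have hkq : (0:ℚ) < (k:ℚ) := by exact_mod_cast hk
  have hbq : (0:ℚ) < (b:ℚ) := by exact_mod_cast hbZ
  have hlt' : (h : ℚ) / k < (a : ℚ) / b := by
    rw [div_lt_div_iff₀ hkq hbq]
    have : h * b + 1 = a * k := by linarith [hab]
    have h2 : (h:ℚ) * b + 1 = (a:ℚ) * k := by exact_mod_cast this
    linarith
  refine ⟨hmem, ?_, hlt', ?_⟩
  · refine ⟨by positivity, ?_, ?_, ?_, ?_⟩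
    · rw [div_le_one hbq]
      have : a ≤ b := by nlinarith
      exact_mod_cast this
    · have : (((a:ℚ)/b).den : ℤ) ≤ ((2*m : ℕ) : ℤ) := by rw [haden]; push_cast; omega
      exact_mod_cast this
    · rw [hanum]; exact ham
    · rw [hanum, haden]; push_cast; omega
  · rintro g ⟨hg0, hg1, hgden, hgnum, hgdiff⟩ ⟨hg2, hg3⟩
    obtain ⟨p, q, hqpos, hgq, hgnum', hgden'⟩ :
        ∃ p q : ℤ, 0 < q ∧ g = (p : ℚ) / q ∧ p = g.num ∧ q = (g.den : ℤ) :=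
      ⟨g.num, (g.den : ℤ), by exact_mod_cast g.pos,
        by push_cast; exact (Rat.num_div_den g).symm, rfl, rfl⟩
    rw [hgq] at hg2 hg3
    have hqq : (0:ℚ) < (q:ℚ) := by exact_mod_cast hqpos
    have hB : 1 ≤ p * k - q * h := by
      have h1 := (div_lt_div_iff₀ hkq hqq).mp hg2
      have h2 : (q:ℚ) * h < (p:ℚ) * k := by linarith
      have h3 : q * h < p * k := by exact_mod_cast h2
      omega
    have hA : 1 ≤ a * q - b * p := by
      have h1 := (div_lt_div_iff₀ hqq hbq).mp hg3
      have h2 : (b:ℚ) * p < (a:ℚ) * q := by linarith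
      have h3 : b * p < a * q := by exact_mod_cast h2
      omega
    have hident : q - p = (k - h) * (a * q - b * p) + (b - a) * (p * k - q * h) := by
      linear_combination (p - q) * hab
    have hqp : (m:ℤ) + 1 ≤ q - p := by
      have e1 : (k - h) * 1 ≤ (k - h) * (a * q - b * p) :=
        mul_le_mul_of_nonneg_left hA hd.le
      have e2 : (b - a) * 1 ≤ (b - a) * (p * k - q * h) :=
        mul_le_mul_of_nonneg_left hB (by omega)
      linarith
    have hfin : q - p ≤ ((2*m : ℕ) : ℤ) - m := by rw [hgnum', hgden']; exact hgdiff
    push_cast at hfin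
    omega
end

section
/- Let m > 1 be an integer and let h_j/k_j < h_{j+1}/k_{j+1} < h_{j+2}/k_{j+2} be three successive fractions of F(B(2m),m), i.e. each is the successor of the preceding one (all fractions in lowest terms), and suppose h_{j+2}/k_{j+2} ≤ 1/2. Then h_j = ⌊(k_{j+2}−h_{j+2}+m)/(k_{j+1}−h_{j+1})⌋·h_{j+1} − h_{j+2}, k_j = ⌊(k_{j+2}−h_{j+2}+m)/(k_{j+1}−h_{j+1})⌋·k_{j+1} − k_{j+2}, h_{j+2} = ⌊(k_j−h_j+m)/(k_{j+1}−h_{j+1})⌋·h_{j+1} − h_j, and k_{j+2} = ⌊(k_j−h_j+m)/(k_{j+1}−h_{j+1})⌋·k_{j+1} − k_j. -/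
/-!
The map `q ↦ q / (1 - q)`, i.e. `h/k ↦ h/(k - h)`, is an order isomorphism from the left half
`F(B(2m),m) ∩ [0, 1/2]` onto the Farey sequence `F_m`, so it carries successive fractions to
successive fractions of `F_m`. Successive fractions `a/b < c/d` of `F_n` satisfy `bc - ad = 1` and
`n < b + d`: the successor of `a/b` is the solution of `bc - ad = 1` with `n - b < d ≤ n`.
For three successive fractions `a/b < c/d < e/f` of `F_n` this gives `a + e = t c` and
`b + f = t d` with `t = be - af`, and `f ≤ n < d + f`, `b ≤ n < b + d` identify `t` as both
`⌊(b + n)/d⌋` and `⌊(f + n)/d⌋`. Pulling back along `q ↦ q / (1 - q)` gives the recurrences.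
-/

open Set

lemma IsSuccIn.of_subset {S T : Set ℚ} {x y : ℚ} (h : IsSuccIn S x y) (hTS : T ⊆ S) (hx : x ∈ T)
    (hy : y ∈ T) : IsSuccIn T x y :=
  ⟨hx, hy, h.2.2.1, fun g hg => h.2.2.2 g (hTS hg)⟩

lemma IsSuccIn.image {S T : Set ℚ} {x y : ℚ} {f : ℚ → ℚ} (h : IsSuccIn S x y)
    (hf : StrictMonoOn f S) (hmaps : MapsTo f S T) (hsurj : SurjOn f S T) :
    IsSuccIn T (f x) (f y) := by
  obtain ⟨hx, hy, hxy, hgap⟩ := h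
  refine ⟨hmaps hx, hmaps hy, hf hx hy hxy, fun g hg ⟨hxg, hgy⟩ => ?_⟩
  obtain ⟨z, hz, rfl⟩ := hsurj hg
  exact hgap z hz ⟨(hf.lt_iff_lt hx hz).1 hxg, (hf.lt_iff_lt hz hy).1 hgy⟩

lemma IsCoprime.exists_det_eq_one_mem_Ioc {a b : ℤ} (hab : IsCoprime a b) (hb : 0 < b) (N : ℤ) :
    ∃ u v : ℤ, b * u - a * v = 1 ∧ v ∈ Ioc (N - b) N := by
  obtain ⟨u₀, v₀, huv⟩ := hab
  have hdiv := Int.emod_add_mul_ediv (N + u₀) b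
  have hmod₀ := Int.emod_nonneg (N + u₀) hb.ne'
  have hmod₁ := Int.emod_lt_of_pos (N + u₀) hb
  exact ⟨v₀ + a * ((N + u₀) / b), -u₀ + b * ((N + u₀) / b), by linear_combination huv,
    by linarith, by linarith⟩

lemma Int.add_le_of_between_of_det_eq_one {a b c d u v : ℤ} (huv : b * u - a * v = 1)
    (hb : 0 ≤ b) (hv : 0 ≤ v) (hlo : a * d < c * b) (hhi : c * v < u * d) : b + v ≤ d := by
  have hd : d = b * (u * d - c * v) + v * (b * c - a * d) := by linear_combination (-d) * huv
  nlinarith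

theorem IsSuccIn.farey_det_eq_one_and_lt_den_add_den {n : ℕ} {x y : ℚ}
    (h : IsSuccIn (Farey n) x y) :
    (x.den : ℤ) * y.num - x.num * y.den = 1 ∧ (n : ℤ) < x.den + y.den := by
  obtain ⟨⟨hx₀, -, hxn⟩, ⟨-, hy₁, hyn⟩, hxy, hgap⟩ := h
  have hxn' : (x.den : ℤ) ≤ n := by exact_mod_cast hxn
  have hyn' : (y.den : ℤ) ≤ n := by exact_mod_cast hyn
  have hx₀' : 0 ≤ x.num := Rat.num_nonneg.2 hx₀
  have hx₁ : x.num < x.den := Rat.num_lt_denom_iff.2 (hxy.trans_le hy₁)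
  -- `y` is forced to be `u / v`: a fraction strictly between `x` and `u / v` has denominator
  -- at least `x.den + v > n`.
  obtain ⟨u, v, huv, hv, hvn⟩ :=
    ((Int.isCoprime_iff_gcd_eq_one (m := x.num) (n := x.den)).2 x.reduced).exists_det_eq_one_mem_Ioc
      (by exact_mod_cast x.pos) n
  have hv₀ : 0 < v := by linarith
  have hcop : Int.gcd u v = 1 :=
    Int.isCoprime_iff_gcd_eq_one.1 ⟨x.den, -x.num, by linear_combination huv⟩
  have hw_num : ((u : ℚ) / v).num = u := Rat.num_div_eq_of_coprime hv₀ hcop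
  have hw_den : (((u : ℚ) / v).den : ℤ) = v := Rat.den_div_eq_of_coprime hv₀ hcop
  have hu₀ : 0 ≤ u := by nlinarith
  have huv' : u ≤ v := by nlinarith
  have hw : (u : ℚ) / v ∈ Farey n := by
    refine ⟨Rat.num_nonneg.1 (hw_num.symm ▸ hu₀), Rat.num_le_denom_iff.1 (by omega), ?_⟩
    exact_mod_cast hw_den.trans_le hvn
  have hxw : x < u / v := (Rat.lt_iff _ _).2 (by rw [hw_num, hw_den]; linarith)
  have hyw : y = u / v := by
    refine le_antisymm (not_lt.1 fun hwy => hgap _ hw ⟨hxw, hwy⟩) (not_lt.1 fun hyw => ?_)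
    have := Int.add_le_of_between_of_det_eq_one huv (by positivity) hv₀.le
      ((Rat.lt_iff x y).1 hxy) (by simpa [hw_num, hw_den] using (Rat.lt_iff y _).1 hyw)
    omega
  rw [hyw, hw_num, hw_den]
  exact ⟨huv, by linarith⟩

lemma add_eq_det_mul_of_det_eq_one {a b c d e f : ℤ} (h₁ : b * c - a * d = 1)
    (h₂ : d * e - c * f = 1) :
    a + e = (b * e - a * f) * c ∧ b + f = (b * e - a * f) * d :=
  ⟨by linear_combination -e * h₁ - a * h₂, by linear_combination -f * h₁ - b * h₂⟩

lemma Int.floor_add_div_eq_of_add_eq_mul {b f N d t : ℤ} (hsum : b + f = t * d) (hf : f ≤ N)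
    (hN : N < d + f) : ⌊((b : ℚ) + N) / d⌋ = t := by
  have hd : (0 : ℚ) < d := by exact_mod_cast (by linarith : (0 : ℤ) < d)
  rw [Int.floor_eq_iff, le_div_iff₀ hd, div_lt_iff₀ hd]
  constructor <;> [exact_mod_cast (by linarith : t * d ≤ b + N);
    exact_mod_cast (by linarith : b + N < (t + 1) * d)]

theorem IsSuccIn.farey_add_eq_floor_mul {n : ℕ} {x y z : ℚ} (hxy : IsSuccIn (Farey n) x y)
    (hyz : IsSuccIn (Farey n) y z) :
    ∃ t : ℤ, x.num + z.num = t * y.num ∧ (x.den : ℤ) + z.den = t * y.den ∧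
      ⌊((x.den : ℚ) + n) / y.den⌋ = t ∧ ⌊((z.den : ℚ) + n) / y.den⌋ = t := by
  obtain ⟨hdet₁, hlt₁⟩ := hxy.farey_det_eq_one_and_lt_den_add_den
  obtain ⟨hdet₂, hlt₂⟩ := hyz.farey_det_eq_one_and_lt_den_add_den
  obtain ⟨hnum, hden⟩ := add_eq_det_mul_of_det_eq_one hdet₁ hdet₂
  have hxn : (x.den : ℤ) ≤ n := by exact_mod_cast hxy.1.2.2
  have hzn : (z.den : ℤ) ≤ n := by exact_mod_cast hyz.2.1.2.2
  refine ⟨_, hnum, hden, ?_, ?_⟩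
  · simpa only [Int.cast_natCast] using Int.floor_add_div_eq_of_add_eq_mul hden hzn (by linarith)
  · simpa only [Int.cast_natCast] using
      Int.floor_add_div_eq_of_add_eq_mul ((add_comm _ _).trans hden) hxn (by linarith)

lemma strictMonoOn_div_one_sub {K : Type*} [Field K] [LinearOrder K] [IsStrictOrderedRing K] :
    StrictMonoOn (fun q : K => q / (1 - q)) (Iio 1) := by
  intro q hq q' hq' hqq'
  rw [mem_Iio] at hq hq'
  rw [div_lt_div_iff₀ (sub_pos.2 hq) (sub_pos.2 hq')]
  linear_combination hqq'

lemma Rat.div_one_sub_eq {q : ℚ} (hq : q < 1) :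
    q / (1 - q) = (q.num : ℚ) / ((q.den : ℤ) - q.num : ℤ) := by
  have hsub : ((q.den : ℤ) - q.num : ℤ) ≠ (0 : ℚ) := by
    exact_mod_cast (sub_pos.2 (Rat.num_lt_denom_iff.2 hq)).ne'
  nth_rw 1 2 [← Rat.num_div_den q]
  push_cast at hsub ⊢
  field_simp

lemma Rat.gcd_num_den_sub_num (q : ℚ) : Int.gcd q.num ((q.den : ℤ) - q.num) = 1 := by
  have := (Int.isCoprime_iff_gcd_eq_one (m := q.num) (n := q.den)).2 q.reduced
  exact Int.isCoprime_iff_gcd_eq_one.1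
    (by simpa [sub_eq_add_neg] using this.add_mul_left_right (-1))

lemma Rat.num_div_one_sub {q : ℚ} (hq : q < 1) : (q / (1 - q)).num = q.num := by
  rw [Rat.div_one_sub_eq hq]
  exact Rat.num_div_eq_of_coprime (sub_pos.2 (Rat.num_lt_denom_iff.2 hq)) q.gcd_num_den_sub_num

lemma Rat.den_div_one_sub {q : ℚ} (hq : q < 1) : ((q / (1 - q)).den : ℤ) = q.den - q.num := by
  rw [Rat.div_one_sub_eq hq]
  exact Rat.den_div_eq_of_coprime (sub_pos.2 (Rat.num_lt_denom_iff.2 hq)) q.gcd_num_den_sub_num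

lemma mapsTo_div_one_sub_fareyB (m : ℕ) :
    MapsTo (fun q : ℚ => q / (1 - q)) (FareyB (2 * m) m ∩ Iic (1 / 2)) (Farey m) := by
  rintro q ⟨⟨hq₀, -, -, -, hqm⟩, hq⟩
  rw [mem_Iic] at hq
  have hden := Rat.den_div_one_sub (hq.trans_lt (by norm_num))
  refine ⟨div_nonneg hq₀ (by linarith), (div_le_one (by linarith)).2 (by linarith), ?_⟩
  push_cast at hqm
  exact_mod_cast (show ((q / (1 - q)).den : ℤ) ≤ m by omega)

lemma surjOn_div_one_sub_fareyB (m : ℕ) :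
    SurjOn (fun q : ℚ => q / (1 - q)) (FareyB (2 * m) m ∩ Iic (1 / 2)) (Farey m) := by
  rintro r ⟨hr₀, hr₁, hrm⟩
  have hr : 0 < 1 + r := by linarith
  set s := r / (1 + r) with hs_def
  have hs_half : s ≤ 1 / 2 := by rw [div_le_iff₀ hr]; linarith
  have hs₁ : s < 1 := hs_half.trans_lt (by norm_num)
  have hs : s / (1 - s) = r := by
    rw [hs_def, one_sub_div hr.ne', div_div_div_cancel_right₀ hr.ne']
    ring
  have hnum : s.num = r.num := by rw [← Rat.num_div_one_sub hs₁, hs]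
  have hden : (s.den : ℤ) - s.num = r.den := by rw [← Rat.den_div_one_sub hs₁, hs]
  have hr_num : r.num ≤ r.den := Rat.num_le_denom_iff.2 hr₁
  have hrm' : (r.den : ℤ) ≤ m := by exact_mod_cast hrm
  refine ⟨s, ⟨⟨div_nonneg hr₀ hr.le, hs₁.le, ?_, by omega, by push_cast; omega⟩, hs_half⟩, hs⟩
  exact_mod_cast (show (s.den : ℤ) ≤ 2 * m by omega)

lemma IsSuccIn.fareyB_div_one_sub {m : ℕ} {x y : ℚ} (h : IsSuccIn (FareyB (2 * m) m) x y)
    (hy : y ≤ 1 / 2) : IsSuccIn (Farey m) (x / (1 - x)) (y / (1 - y)) := by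
  have hhalf : Iic (1 / 2 : ℚ) ⊆ Iio 1 := Iic_subset_Iio.2 (by norm_num)
  exact (h.of_subset inter_subset_left ⟨h.1, h.2.2.1.le.trans hy⟩ ⟨h.2.1, hy⟩).image
    (strictMonoOn_div_one_sub.mono (inter_subset_right.trans hhalf))
    (mapsTo_div_one_sub_fareyB m) (surjOn_div_one_sub_fareyB m)

lemma Rat.num_den_div_one_sub_of_coprime {h k : ℤ} (hk : 0 < k) (hc : Int.gcd h k = 1)
    (hlt : (h : ℚ) / k < 1) :
    ((h : ℚ) / k / (1 - h / k)).num = h ∧ (((h : ℚ) / k / (1 - h / k)).den : ℤ) = k - h := by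
  rw [Rat.num_div_one_sub hlt, Rat.den_div_one_sub hlt, Rat.num_div_eq_of_coprime hk hc,
    Rat.den_div_eq_of_coprime hk hc]
  exact ⟨rfl, rfl⟩

theorem stmt_19_general (m : ℕ)
    (h₁ k₁ h₂ k₂ h₃ k₃ : ℤ)
    (hk₁ : 0 < k₁) (hk₂ : 0 < k₂) (hk₃ : 0 < k₃)
    (hc₁ : Int.gcd h₁ k₁ = 1) (hc₂ : Int.gcd h₂ k₂ = 1) (hc₃ : Int.gcd h₃ k₃ = 1)
    (hs₁ : IsSuccIn (FareyB (2 * m) m) ((h₁ : ℚ) / (k₁ : ℚ)) ((h₂ : ℚ) / (k₂ : ℚ)))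
    (hs₂ : IsSuccIn (FareyB (2 * m) m) ((h₂ : ℚ) / (k₂ : ℚ)) ((h₃ : ℚ) / (k₃ : ℚ)))
    (hle : (h₃ : ℚ) / (k₃ : ℚ) ≤ 1 / 2) :
    h₁ = ⌊((k₃ : ℚ) - (h₃ : ℚ) + (m : ℚ)) / ((k₂ : ℚ) - (h₂ : ℚ))⌋ * h₂ - h₃ ∧
    k₁ = ⌊((k₃ : ℚ) - (h₃ : ℚ) + (m : ℚ)) / ((k₂ : ℚ) - (h₂ : ℚ))⌋ * k₂ - k₃ ∧
    h₃ = ⌊((k₁ : ℚ) - (h₁ : ℚ) + (m : ℚ)) / ((k₂ : ℚ) - (h₂ : ℚ))⌋ * h₂ - h₁ ∧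
    k₃ = ⌊((k₁ : ℚ) - (h₁ : ℚ) + (m : ℚ)) / ((k₂ : ℚ) - (h₂ : ℚ))⌋ * k₂ - k₁ := by
  have hle₂ : (h₂ : ℚ) / k₂ ≤ 1 / 2 := hs₂.2.2.1.le.trans hle
  have hle₁ : (h₁ : ℚ) / k₁ ≤ 1 / 2 := hs₁.2.2.1.le.trans hle₂
  obtain ⟨t, hnum, hden, hfloor₁, hfloor₃⟩ :=
    (hs₁.fareyB_div_one_sub hle₂).farey_add_eq_floor_mul (hs₂.fareyB_div_one_sub hle)
  obtain ⟨hn₁, hd₁⟩ := Rat.num_den_div_one_sub_of_coprime hk₁ hc₁ (by linarith)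
  obtain ⟨hn₂, hd₂⟩ := Rat.num_den_div_one_sub_of_coprime hk₂ hc₂ (by linarith)
  obtain ⟨hn₃, hd₃⟩ := Rat.num_den_div_one_sub_of_coprime hk₃ hc₃ (by linarith)
  rw [hn₁, hn₂, hn₃] at hnum
  rw [hd₁, hd₂, hd₃] at hden
  have hcast : ∀ {d : ℕ} {a : ℤ}, (d : ℤ) = a → (d : ℚ) = a := fun h => by exact_mod_cast h
  rw [hcast hd₁, hcast hd₂] at hfloor₁
  rw [hcast hd₃, hcast hd₂] at hfloor₃
  push_cast at hfloor₁ hfloor₃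
  rw [hfloor₁, hfloor₃]
  exact ⟨by linear_combination hnum, by linear_combination hden + hnum,
    by linear_combination hnum, by linear_combination hden + hnum⟩

/-- Recurrences among three successive fractions of `F(B(2m),m)` lying in the
left halfsequence (`h_{j+2}/k_{j+2} ≤ 1/2`). -/
theorem stmt_19 (m : ℕ) (hm : 1 < m)
    (h₁ k₁ h₂ k₂ h₃ k₃ : ℤ)
    (hk₁ : 0 < k₁) (hk₂ : 0 < k₂) (hk₃ : 0 < k₃)
    (hc₁ : Int.gcd h₁ k₁ = 1) (hc₂ : Int.gcd h₂ k₂ = 1) (hc₃ : Int.gcd h₃ k₃ = 1)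
    (hm₁ : (h₁ : ℚ) / (k₁ : ℚ) ∈ FareyB (2 * m) m)
    (hm₂ : (h₂ : ℚ) / (k₂ : ℚ) ∈ FareyB (2 * m) m)
    (hm₃ : (h₃ : ℚ) / (k₃ : ℚ) ∈ FareyB (2 * m) m)
    (hs₁ : IsSuccIn (FareyB (2 * m) m) ((h₁ : ℚ) / (k₁ : ℚ)) ((h₂ : ℚ) / (k₂ : ℚ)))
    (hs₂ : IsSuccIn (FareyB (2 * m) m) ((h₂ : ℚ) / (k₂ : ℚ)) ((h₃ : ℚ) / (k₃ : ℚ)))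
    (hle : (h₃ : ℚ) / (k₃ : ℚ) ≤ 1 / 2) :
    h₁ = ⌊((k₃ : ℚ) - (h₃ : ℚ) + (m : ℚ)) / ((k₂ : ℚ) - (h₂ : ℚ))⌋ * h₂ - h₃ ∧
    k₁ = ⌊((k₃ : ℚ) - (h₃ : ℚ) + (m : ℚ)) / ((k₂ : ℚ) - (h₂ : ℚ))⌋ * k₂ - k₃ ∧
    h₃ = ⌊((k₁ : ℚ) - (h₁ : ℚ) + (m : ℚ)) / ((k₂ : ℚ) - (h₂ : ℚ))⌋ * h₂ - h₁ ∧
    k₃ = ⌊((k₁ : ℚ) - (h₁ : ℚ) + (m : ℚ)) / ((k₂ : ℚ) - (h₂ : ℚ))⌋ * k₂ - k₁ :=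
  stmt_19_general m h₁ k₁ h₂ k₂ h₃ k₃ hk₁ hk₂ hk₃ hc₁ hc₂ hc₃ hs₁ hs₂ hle
end
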